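/- arXiv:1506.07898 — 3 statements merged into one kernel-verified Lean document; each statement's English description precedes it below -/
import Mathlib

section
/- For every n ≥ 1, |D_{2n}^{=0}(n)| = |D_{2n}^-(n)|, i.e., the number of lattice paths with n upsteps and n downsteps that never go below y=0 equals the number of lattice paths with n upsteps and n downsteps that have exactly one point of the form (x,-1), 1 ≤ x ≤ 2n. -/
/-- The number of 1-bits among the first `j` bits of `x`.  Identifying bitstrings with
lattice paths (1 = upstep, 0 = downstep starting at `(0,0)`), the height of the path
after `j` steps is `2 * prefixOnes x j - j`. -/
def prefixOnes {m : ℕ} (x : Fin m → Bool) (j : ℕ) : ℕ :=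
  (Finset.univ.filter fun i : Fin m => i.val < j ∧ x i = true).card

lemma pOne_zero {m : ℕ} (x : Fin m → Bool) : prefixOnes x 0 = 0 := by
  simp [prefixOnes]

lemma pOne_succ {m : ℕ} (x : Fin m → Bool) (j : ℕ) :
    prefixOnes x (j+1) = prefixOnes x j +
      (if h : j < m then (if x ⟨j, h⟩ = true then 1 else 0) else 0) := by
  unfold prefixOnes
  by_cases h : j < m
  · rw [dif_pos h]
    by_cases hx : x ⟨j, h⟩ = true
    · rw [if_pos hx]
      have hset : (Finset.univ.filter fun i : Fin m => i.val < j+1 ∧ x i = true)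
          = insert ⟨j, h⟩ (Finset.univ.filter fun i : Fin m => i.val < j ∧ x i = true) := by
        ext i
        simp only [Finset.mem_filter, Finset.mem_insert, Finset.mem_univ, true_and, Fin.ext_iff]
        constructor
        · rintro ⟨h1, h2⟩
          rcases Nat.lt_succ_iff_lt_or_eq.mp h1 with h1 | h1
          · exact Or.inr ⟨h1, h2⟩
          · exact Or.inl h1
        · rintro (h1 | ⟨h1, h2⟩)
          · refine ⟨by omega, ?_⟩
            have : i = ⟨j, h⟩ := Fin.ext h1
            rw [this]; exact hx
          · exact ⟨by omega, h2⟩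
      rw [hset, Finset.card_insert_of_notMem (by simp)]
    · rw [if_neg hx]
      have hset : (Finset.univ.filter fun i : Fin m => i.val < j+1 ∧ x i = true)
          = (Finset.univ.filter fun i : Fin m => i.val < j ∧ x i = true) := by
        ext i
        simp only [Finset.mem_filter, Finset.mem_univ, true_and]
        constructor
        · rintro ⟨h1, h2⟩
          refine ⟨?_, h2⟩
          rcases Nat.lt_succ_iff_lt_or_eq.mp h1 with h1 | h1
          · exact h1
          · exfalso; apply hx
            have : i = ⟨j, h⟩ := Fin.ext h1
            rw [← this]; exact h2
        · rintro ⟨h1, h2⟩; exact ⟨by omega, h2⟩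
      rw [hset]; ring
  · rw [dif_neg h]
    have hset : (Finset.univ.filter fun i : Fin m => i.val < j+1 ∧ x i = true)
        = (Finset.univ.filter fun i : Fin m => i.val < j ∧ x i = true) := by
      ext i
      have := i.isLt
      simp only [Finset.mem_filter, Finset.mem_univ, true_and]
      constructor
      · rintro ⟨h1, h2⟩; exact ⟨by omega, h2⟩
      · rintro ⟨h1, h2⟩; exact ⟨by omega, h2⟩
    rw [hset]; ring

/-- height after `j` steps, as an integer -/
def Ht {m : ℕ} (x : Fin m → Bool) (j : ℕ) : ℤ := 2 * (prefixOnes x j : ℤ) - j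

lemma Ht_zero {m : ℕ} (x : Fin m → Bool) : Ht x 0 = 0 := by
  simp [Ht, pOne_zero]

lemma Ht_succ {m : ℕ} (x : Fin m → Bool) (j : ℕ) (h : j < m) :
    Ht x (j+1) = Ht x j + (if x ⟨j, h⟩ = true then 1 else -1) := by
  unfold Ht
  rw [pOne_succ, dif_pos h]
  by_cases hx : x ⟨j, h⟩ = true <;> simp [hx] <;> ring

lemma Ht_step_abs {m : ℕ} (x : Fin m → Bool) (j : ℕ) (h : j < m) :
    Ht x (j+1) = Ht x j + 1 ∨ Ht x (j+1) = Ht x j - 1 := by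
  rw [Ht_succ x j h]
  by_cases hx : x ⟨j, h⟩ = true
  · left; rw [if_pos hx]
  · right; rw [if_neg hx]; ring

lemma cross_down_aux {m : ℕ} (x : Fin m → Bool) (v : ℤ) :
    ∀ d a, a + d ≤ m → v ≤ Ht x a → Ht x (a + d) ≤ v →
      ∃ k, a ≤ k ∧ k ≤ a + d ∧ Ht x k = v := by
  intro d
  induction d with
  | zero => intro a _ h1 h2; exact ⟨a, le_refl a, by omega, le_antisymm (by simpa using h2) h1⟩
  | succ d ih =>
    intro a hm h1 h2
    by_cases he : Ht x a = v
    · exact ⟨a, le_refl a, by omega, he⟩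
    · have hgt : v + 1 ≤ Ht x a := by omega
      have ha : a < m := by omega
      have hstep := Ht_step_abs x a ha
      have h1' : v ≤ Ht x (a+1) := by omega
      have heq : a + 1 + d = a + (d+1) := by omega
      obtain ⟨k, hk1, hk2, hk3⟩ := ih (a+1) (by omega) h1' (by rw [heq]; exact h2)
      exact ⟨k, by omega, by omega, hk3⟩

lemma cross_down {m : ℕ} (x : Fin m → Bool) (v : ℤ) (a b : ℕ) (hab : a ≤ b) (hb : b ≤ m)
    (h1 : v ≤ Ht x a) (h2 : Ht x b ≤ v) : ∃ k, a ≤ k ∧ k ≤ b ∧ Ht x k = v := by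
  obtain ⟨d, rfl⟩ : ∃ d, b = a + d := ⟨b - a, by omega⟩
  exact cross_down_aux x v d a hb h1 h2

lemma cross_up_aux {m : ℕ} (x : Fin m → Bool) (v : ℤ) :
    ∀ d a, a + d ≤ m → Ht x a ≤ v → v ≤ Ht x (a + d) →
      ∃ k, a ≤ k ∧ k ≤ a + d ∧ Ht x k = v := by
  intro d
  induction d with
  | zero => intro a _ h1 h2; exact ⟨a, le_refl a, by omega, le_antisymm h1 (by simpa using h2)⟩
  | succ d ih =>
    intro a hm h1 h2
    by_cases he : Ht x a = v
    · exact ⟨a, le_refl a, by omega, he⟩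
    · have ha : a < m := by
        by_contra hc
        have : a + (d+1) ≤ a := by omega
        omega
      have hstep := Ht_step_abs x a ha
      have h1' : Ht x (a+1) ≤ v := by omega
      have heq : a + 1 + d = a + (d+1) := by omega
      obtain ⟨k, hk1, hk2, hk3⟩ := ih (a+1) (by omega) h1' (by rw [heq]; exact h2)
      exact ⟨k, by omega, by omega, hk3⟩

lemma cross_up {m : ℕ} (x : Fin m → Bool) (v : ℤ) (a b : ℕ) (hab : a ≤ b) (hb : b ≤ m)
    (h1 : Ht x a ≤ v) (h2 : v ≤ Ht x b) : ∃ k, a ≤ k ∧ k ≤ b ∧ Ht x k = v := by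
  obtain ⟨d, rfl⟩ : ∃ d, b = a + d := ⟨b - a, by omega⟩
  exact cross_up_aux x v d a hb h1 h2

/-- rotate the first `j+1` bits right by one (bring bit `j` to the front). -/
def rot {m : ℕ} (j : ℕ) (x : Fin m → Bool) : Fin m → Bool := fun i =>
  if h : i.val ≤ j ∧ j < m then
    (if i.val = 0 then x ⟨j, h.2⟩
     else x ⟨i.val - 1, Nat.lt_of_le_of_lt (Nat.sub_le _ _) i.isLt⟩)
  else x i

/-- rotate the first `j+1` bits left by one (send bit `0` to position `j`). -/
def unrot {m : ℕ} (j : ℕ) (y : Fin m → Bool) : Fin m → Bool := fun i =>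
  if h : i.val < j ∧ j < m then y ⟨i.val + 1, by omega⟩
  else if i.val = j then y ⟨0, Nat.lt_of_le_of_lt (Nat.zero_le _) i.isLt⟩
  else y i

lemma unrot_rot {m : ℕ} (j : ℕ) (hj : j < m) (x : Fin m → Bool) :
    unrot j (rot j x) = x := by
  funext i
  unfold unrot rot
  by_cases h1 : i.val < j
  · rw [dif_pos ⟨h1, hj⟩, dif_pos ⟨by simp only [Fin.val_mk]; omega, hj⟩,
      if_neg (by simp only [Fin.val_mk]; omega)]
    exact congrArg x (Fin.ext (by simp))
  · rw [dif_neg (by omega)]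
    by_cases h2 : i.val = j
    · rw [if_pos h2, dif_pos ⟨by simp only [Fin.val_mk]; omega, hj⟩, if_pos rfl]
      exact congrArg x (Fin.ext (by simp [h2]))
    · rw [if_neg h2, dif_neg (by omega)]

lemma rot_unrot {m : ℕ} (j : ℕ) (hj : j < m) (y : Fin m → Bool) :
    rot j (unrot j y) = y := by
  funext i
  unfold rot unrot
  by_cases h0 : i.val = 0
  · by_cases h1 : i.val ≤ j
    · rw [dif_pos ⟨h1, hj⟩, if_pos h0, dif_neg (by simp only [Fin.val_mk]; omega),
        if_pos (by simp only [Fin.val_mk])]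
      exact congrArg y (Fin.ext (by simp [h0]))
    · omega
  · by_cases h1 : i.val ≤ j
    · rw [dif_pos ⟨h1, hj⟩, if_neg h0, dif_pos ⟨by simp only [Fin.val_mk]; omega, hj⟩]
      exact congrArg y (Fin.ext (by simp only [Fin.val_mk]; omega))
    · rw [dif_neg (by omega), dif_neg (by omega), if_neg (by omega)]

lemma pOne_rot_le {m : ℕ} (j : ℕ) (hj : j < m) (x : Fin m → Bool)
    (hxj : x ⟨j, hj⟩ = true) :
    ∀ k, k < j → prefixOnes (rot j x) (k+1) = prefixOnes x k + 1 := by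
  intro k
  induction k with
  | zero =>
    intro hk
    rw [pOne_succ, dif_pos (by omega : (0:ℕ) < m), pOne_zero, pOne_zero]
    have : rot j x ⟨0, by omega⟩ = true := by
      unfold rot
      rw [dif_pos ⟨by simp only [Fin.val_mk]; omega, hj⟩, if_pos (by simp only [Fin.val_mk])]
      exact hxj
    rw [if_pos this]
  | succ k ih =>
    intro hk
    have hk' : k < j := by omega
    have hkm : k + 1 < m := by omega
    have hbit : rot j x ⟨k+1, hkm⟩ = x ⟨k, by omega⟩ := by
      unfold rot
      rw [dif_pos ⟨by simp only [Fin.val_mk]; omega, hj⟩, if_neg (by simp only [Fin.val_mk]; omega)]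
      exact congrArg x (Fin.ext (by simp only [Fin.val_mk]; omega))
    rw [pOne_succ (rot j x) (k+1), dif_pos hkm, hbit, ih hk',
      pOne_succ x k, dif_pos (by omega : k < m)]
    split_ifs <;> omega

lemma pOne_rot_gt {m : ℕ} (j : ℕ) (hj : j < m) (x : Fin m → Bool)
    (hxj : x ⟨j, hj⟩ = true) :
    ∀ k, j < k → prefixOnes (rot j x) k = prefixOnes x k := by
  have base : prefixOnes (rot j x) (j+1) = prefixOnes x (j+1) := by
    rcases Nat.eq_zero_or_pos j with hj0 | hj0
    · subst hj0
      rw [pOne_succ, dif_pos hj, pOne_succ x 0, dif_pos hj, pOne_zero, pOne_zero]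
      have : rot 0 x ⟨0, hj⟩ = x ⟨0, hj⟩ := by
        unfold rot
        rw [dif_pos ⟨by simp only [Fin.val_mk]; omega, hj⟩, if_pos (by simp only [Fin.val_mk])]
      rw [this]
    · obtain ⟨j', rfl⟩ : ∃ j', j = j' + 1 := ⟨j - 1, by omega⟩
      have hbit : rot (j'+1) x ⟨j'+1, hj⟩ = x ⟨j', by omega⟩ := by
        unfold rot
        rw [dif_pos ⟨by simp only [Fin.val_mk]; omega, hj⟩, if_neg (by simp only [Fin.val_mk]; omega)]
        exact congrArg x (Fin.ext (by simp only [Fin.val_mk]; omega))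
      have hle := pOne_rot_le (j'+1) hj x hxj j' (by omega)
      rw [pOne_succ (rot (j'+1) x) (j'+1), dif_pos hj, hbit, hle,
        pOne_succ x (j'+1), dif_pos hj, hxj, if_pos rfl,
        pOne_succ x j', dif_pos (by omega : j' < m)]
      split_ifs <;> omega
  intro k hk
  obtain ⟨d, rfl⟩ : ∃ d, k = (j+1) + d := ⟨k - (j+1), by omega⟩
  clear hk
  induction d with
  | zero => simpa using base
  | succ d ih =>
    have : j + 1 + (d + 1) = (j + 1 + d) + 1 := by omega
    rw [this, pOne_succ, pOne_succ, ih]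
    by_cases hm : j + 1 + d < m
    · rw [dif_pos hm, dif_pos hm]
      have : rot j x ⟨j+1+d, hm⟩ = x ⟨j+1+d, hm⟩ := by
        unfold rot
        rw [dif_neg (by simp only [Fin.val_mk]; omega)]
      rw [this]
    · rw [dif_neg hm, dif_neg hm]

lemma pOne_unrot_le {m : ℕ} (j : ℕ) (hj : j < m) (y : Fin m → Bool)
    (hy0 : y ⟨0, by omega⟩ = true) :
    ∀ k, k ≤ j → prefixOnes y (k+1) = prefixOnes (unrot j y) k + 1 := by
  intro k
  induction k with
  | zero =>
    intro _
    rw [pOne_succ, dif_pos (by omega : (0:ℕ) < m), pOne_zero, pOne_zero, hy0, if_pos rfl]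
  | succ k ih =>
    intro hk
    have hkm : k + 1 < m := by omega
    have hbit : unrot j y ⟨k, by omega⟩ = y ⟨k+1, hkm⟩ := by
      unfold unrot
      rw [dif_pos ⟨by simp only [Fin.val_mk]; omega, hj⟩]
    rw [pOne_succ y (k+1), dif_pos hkm, pOne_succ (unrot j y) k, dif_pos (by omega : k < m),
      hbit, ih (by omega)]
    split_ifs <;> omega

lemma pOne_unrot_gt {m : ℕ} (j : ℕ) (hj : j < m) (y : Fin m → Bool)
    (hy0 : y ⟨0, by omega⟩ = true) :
    ∀ k, j < k → prefixOnes (unrot j y) k = prefixOnes y k := by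
  have base : prefixOnes (unrot j y) (j+1) = prefixOnes y (j+1) := by
    have hbit : unrot j y ⟨j, hj⟩ = true := by
      unfold unrot
      rw [dif_neg (by simp only [Fin.val_mk]; omega), if_pos (by simp only [Fin.val_mk])]
      exact hy0
    have hle := pOne_unrot_le j hj y hy0 j (le_refl j)
    rw [pOne_succ (unrot j y) j, dif_pos hj, hbit, if_pos rfl]
    omega
  intro k hk
  obtain ⟨d, rfl⟩ : ∃ d, k = (j+1) + d := ⟨k - (j+1), by omega⟩
  clear hk
  induction d with
  | zero => simpa using base
  | succ d ih =>
    have : j + 1 + (d + 1) = (j + 1 + d) + 1 := by omega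
    rw [this, pOne_succ, pOne_succ, ih]
    by_cases hm : j + 1 + d < m
    · rw [dif_pos hm, dif_pos hm]
      have : unrot j y ⟨j+1+d, hm⟩ = y ⟨j+1+d, hm⟩ := by
        unfold unrot
        rw [dif_neg (by simp only [Fin.val_mk]; omega), if_neg (by simp only [Fin.val_mk]; omega)]
      rw [this]
    · rw [dif_neg hm, dif_neg hm]

lemma ht_neg1_iff {m : ℕ} (x : Fin m → Bool) (k : ℕ) :
    Ht x k = -1 ↔ 2 * prefixOnes x k + 1 = k := by
  simp only [Ht]; omega

lemma ht_zero_iff {m : ℕ} (x : Fin m → Bool) (k : ℕ) :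
    Ht x k = 0 ↔ 2 * prefixOnes x k = k := by
  simp only [Ht]; omega

lemma ht_nonneg_iff {m : ℕ} (x : Fin m → Bool) (k : ℕ) :
    0 ≤ Ht x k ↔ k ≤ 2 * prefixOnes x k := by
  simp only [Ht]; omega

/-- the unique position where the path touches height `-1` (for `Dminus` members) -/
noncomputable def jD {m : ℕ} (x : Fin m → Bool) : ℕ := sInf {j | 2 * prefixOnes x j + 1 = j}

/-- the first return to height `0` (for `Dzero` members) -/
noncomputable def rD {m : ℕ} (y : Fin m → Bool) : ℕ := sInf {r | 0 < r ∧ 2 * prefixOnes y r = r}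

/-- `D_{2n}^{=0}(n)`: bitstrings of length `2n` with `n` ones whose lattice path never
moves below the line `y = 0`. -/
def Dzero (n : ℕ) : Finset (Fin (2 * n) → Bool) :=
  Finset.univ.filter fun x =>
    prefixOnes x (2 * n) = n ∧ ∀ j ≤ 2 * n, j ≤ 2 * prefixOnes x j

/-- `D_{2n}^-(n)`: bitstrings of length `2n` with `n` ones whose lattice path has exactly
one point of the form `(j,-1)` with `1 ≤ j ≤ 2n` (height `-1` means `2·ones + 1 = j`). -/
def Dminus (n : ℕ) : Finset (Fin (2 * n) → Bool) :=
  Finset.univ.filter fun x =>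
    prefixOnes x (2 * n) = n ∧
    ((Finset.Icc 1 (2 * n)).filter fun j => 2 * prefixOnes x j + 1 = j).card = 1

lemma Dminus_spec {n : ℕ} (x : Fin (2 * n) → Bool) (hx : x ∈ Dminus n) :
    ∃ a, jD x = a ∧ 1 ≤ a ∧ a + 1 ≤ 2 * n ∧ prefixOnes x (2 * n) = n ∧
      Ht x a = -1 ∧ Ht x (a + 1) = 0 ∧
      (∀ k, k ≤ 2 * n → k ≠ a → 0 ≤ Ht x k) ∧
      ∀ (ha : a < 2 * n), x ⟨a, ha⟩ = true := by
  rw [Dminus, Finset.mem_filter] at hx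
  obtain ⟨-, hsum, hcard⟩ := hx
  obtain ⟨a, hfa⟩ := Finset.card_eq_one.mp hcard
  have hmem : ∀ k, (1 ≤ k ∧ k ≤ 2 * n) ∧ 2 * prefixOnes x k + 1 = k ↔ k = a := by
    intro k
    have h := Finset.ext_iff.mp hfa k
    simp only [Finset.mem_filter, Finset.mem_Icc, Finset.mem_singleton, and_assoc] at h
    tauto
  have haP : (1 ≤ a ∧ a ≤ 2 * n) ∧ 2 * prefixOnes x a + 1 = a := (hmem a).mpr rfl
  have hEnd : Ht x (2 * n) = 0 := by rw [ht_zero_iff, hsum]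
  have hHa : Ht x a = -1 := (ht_neg1_iff x a).mpr haP.2
  have key : ∀ k, k ≤ 2 * n → k ≠ a → 0 ≤ Ht x k := by
    intro k hk hka
    by_contra hneg
    push_neg at hneg
    rcases eq_or_lt_of_le (show Ht x k ≤ -1 by omega) with heq | hlt
    · have : k = a := by
        apply (hmem k).mp
        have hk1 := (ht_neg1_iff x k).mp heq
        exact ⟨⟨by omega, hk⟩, hk1⟩
      exact hka this
    · have h2 : Ht x k ≤ -2 := by omega
      obtain ⟨k1, hk11, hk12, hk13⟩ := cross_down x (-1) 0 k (by omega) hk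
        (by rw [Ht_zero]; omega) (by omega)
      obtain ⟨k2, hk21, hk22, hk23⟩ := cross_up x (-1) k (2 * n) hk (le_refl _)
        (by omega) (by rw [hEnd]; omega)
      have e1 : k1 = a := by
        apply (hmem k1).mp
        have := (ht_neg1_iff x k1).mp hk13
        exact ⟨⟨by omega, by omega⟩, this⟩
      have e2 : k2 = a := by
        apply (hmem k2).mp
        have := (ht_neg1_iff x k2).mp hk23
        exact ⟨⟨by omega, by omega⟩, this⟩
      have hne1 : k1 ≠ k := fun h => by rw [h] at hk13; omega
      have hne2 : k2 ≠ k := fun h => by rw [h] at hk23; omega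
      omega
  have hane : a ≠ 2 * n := fun h => by rw [h, hEnd] at hHa; omega
  have ha2 : a + 1 ≤ 2 * n := by omega
  have hstep := Ht_step_abs x a (by omega)
  have hnext : Ht x (a + 1) = 0 := by
    have := key (a + 1) ha2 (by omega)
    omega
  have hbit : ∀ (ha : a < 2 * n), x ⟨a, ha⟩ = true := by
    intro ha
    by_contra hb
    have := Ht_succ x a ha
    rw [if_neg hb] at this
    omega
  have hjD : jD x = a := by
    have haS : a ∈ {j | 2 * prefixOnes x j + 1 = j} := haP.2
    have h1 : jD x ≤ a := Nat.sInf_le haS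
    have h2 : jD x ∈ {j | 2 * prefixOnes x j + 1 = j} := Nat.sInf_mem ⟨a, haS⟩
    by_contra hne
    have hlt : jD x < a := by omega
    have := key (jD x) (by omega) (by omega)
    rw [ht_nonneg_iff] at this
    have h3 : 2 * prefixOnes x (jD x) + 1 = jD x := h2
    omega
  exact ⟨a, hjD, haP.1.1, ha2, hsum, hHa, hnext, key, hbit⟩

lemma Dzero_spec {n : ℕ} (hn : 1 ≤ n) (y : Fin (2 * n) → Bool) (hy : y ∈ Dzero n) :
    ∃ r, rD y = r ∧ 2 ≤ r ∧ r ≤ 2 * n ∧ prefixOnes y (2 * n) = n ∧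
      2 * prefixOnes y r = r ∧
      (∀ k, 0 < k → k < r → 2 * prefixOnes y k ≠ k) ∧
      (∀ (h0 : 0 < 2 * n), y ⟨0, h0⟩ = true) ∧
      ∀ k ≤ 2 * n, k ≤ 2 * prefixOnes y k := by
  rw [Dzero, Finset.mem_filter] at hy
  obtain ⟨-, hsum, hge⟩ := hy
  have h2n : (0:ℕ) < 2 * n := by omega
  have hS : (2 * n) ∈ {r | 0 < r ∧ 2 * prefixOnes y r = r} := ⟨h2n, by omega⟩
  have hr1 : rD y ≤ 2 * n := Nat.sInf_le hS
  have hr2 : rD y ∈ {r | 0 < r ∧ 2 * prefixOnes y r = r} := Nat.sInf_mem ⟨_, hS⟩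
  obtain ⟨hrpos, hrret⟩ := hr2
  have hrne1 : rD y ≠ 1 := by
    intro h
    rw [h] at hrret
    omega
  have hmin : ∀ k, 0 < k → k < rD y → 2 * prefixOnes y k ≠ k := by
    intro k hk1 hk2 hk3
    have : rD y ≤ k := Nat.sInf_le ⟨hk1, hk3⟩
    omega
  have hy0 : ∀ (h0 : 0 < 2 * n), y ⟨0, h0⟩ = true := by
    intro h0
    have hp1 : 1 ≤ 2 * prefixOnes y 1 := hge 1 (by omega)
    have h01 := pOne_succ y 0
    rw [dif_pos h0, pOne_zero] at h01
    norm_num at h01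
    by_contra hb
    rw [if_neg hb] at h01
    omega
  have hr3 : 2 ≤ rD y := by omega
  exact ⟨rD y, rfl, hr3, hr1, hsum, hrret, hmin, hy0, hge⟩

lemma F_mem {n : ℕ} (x : Fin (2 * n) → Bool) (hx : x ∈ Dminus n) :
    rot (jD x) x ∈ Dzero n := by
  obtain ⟨a, hja, ha1, ha2, hsum, hHa, hnext, key, hbit⟩ := Dminus_spec x hx
  rw [hja]
  have ham : a < 2 * n := by omega
  have hb := hbit ham
  rw [Dzero, Finset.mem_filter]
  refine ⟨Finset.mem_univ _, ?_, ?_⟩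
  · rw [pOne_rot_gt a ham x hb (2 * n) (by omega), hsum]
  · intro k hk
    rcases Nat.eq_zero_or_pos k with rfl | hk0
    · exact Nat.zero_le _
    by_cases hka : k ≤ a
    · obtain ⟨k', rfl⟩ : ∃ k', k = k' + 1 := ⟨k - 1, by omega⟩
      rw [pOne_rot_le a ham x hb k' (by omega)]
      have := key k' (by omega) (by omega)
      rw [ht_nonneg_iff] at this
      omega
    · rw [pOne_rot_gt a ham x hb k (by omega)]
      have := key k hk (by omega)
      rw [ht_nonneg_iff] at this
      omega

lemma rD_F {n : ℕ} (x : Fin (2 * n) → Bool) (hx : x ∈ Dminus n) :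
    rD (rot (jD x) x) = jD x + 1 := by
  obtain ⟨a, hja, ha1, ha2, hsum, hHa, hnext, key, hbit⟩ := Dminus_spec x hx
  rw [hja]
  have ham : a < 2 * n := by omega
  have hb := hbit ham
  have hmem : (a + 1) ∈ {r | 0 < r ∧ 2 * prefixOnes (rot a x) r = r} := by
    refine ⟨by omega, ?_⟩
    rw [pOne_rot_gt a ham x hb (a + 1) (by omega)]
    rw [ht_zero_iff] at hnext
    exact hnext
  have h1 : rD (rot a x) ≤ a + 1 := Nat.sInf_le hmem
  have h2 : rD (rot a x) ∈ {r | 0 < r ∧ 2 * prefixOnes (rot a x) r = r} :=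
    Nat.sInf_mem ⟨_, hmem⟩
  obtain ⟨hpos, hret⟩ := h2
  by_contra hne
  have hlt : rD (rot a x) < a + 1 := by omega
  obtain ⟨k', hkk⟩ : ∃ k', rD (rot a x) = k' + 1 := ⟨rD (rot a x) - 1, by omega⟩
  rw [hkk] at hret hlt
  rw [pOne_rot_le a ham x hb k' (by omega)] at hret
  have := key k' (by omega) (by omega)
  rw [ht_nonneg_iff] at this
  omega

lemma G_mem {n : ℕ} (hn : 1 ≤ n) (y : Fin (2 * n) → Bool) (hy : y ∈ Dzero n) :
    unrot (rD y - 1) y ∈ Dminus n := by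
  obtain ⟨r, hr, hr2, hr3, hsum, hret, hmin, hy0, hge⟩ := Dzero_spec hn y hy
  rw [hr]
  obtain ⟨j, rfl⟩ : ∃ j, r = j + 1 := ⟨r - 1, by omega⟩
  simp only [Nat.add_sub_cancel]
  have hj : j < 2 * n := by omega
  have hb := hy0 (by omega)
  rw [Dminus, Finset.mem_filter]
  refine ⟨Finset.mem_univ _, ?_, ?_⟩
  · rw [pOne_unrot_gt j hj y hb (2 * n) (by omega), hsum]
  · have hset : (Finset.Icc 1 (2 * n)).filter
        (fun k => 2 * prefixOnes (unrot j y) k + 1 = k) = {j} := by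
      ext k
      simp only [Finset.mem_filter, Finset.mem_Icc, Finset.mem_singleton]
      constructor
      · rintro ⟨⟨hk1, hk2⟩, hkc⟩
        by_contra hkj
        rcases lt_or_gt_of_ne hkj with hlt | hgt
        · have h1 := pOne_unrot_le j hj y hb k (by omega)
          have h2 := hmin (k + 1) (by omega) (by omega)
          omega
        · rw [pOne_unrot_gt j hj y hb k (by omega)] at hkc
          have := hge k (by omega)
          omega
      · rintro rfl
        refine ⟨⟨by omega, by omega⟩, ?_⟩
        have := pOne_unrot_le _ hj y hb _ (le_refl _)
        omega
    rw [hset, Finset.card_singleton]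

lemma jD_G {n : ℕ} (hn : 1 ≤ n) (y : Fin (2 * n) → Bool) (hy : y ∈ Dzero n) :
    jD (unrot (rD y - 1) y) = rD y - 1 := by
  obtain ⟨r, hr, hr2, hr3, hsum, hret, hmin, hy0, hge⟩ := Dzero_spec hn y hy
  rw [hr]
  obtain ⟨j, rfl⟩ : ∃ j, r = j + 1 := ⟨r - 1, by omega⟩
  simp only [Nat.add_sub_cancel]
  have hj : j < 2 * n := by omega
  have hb := hy0 (by omega)
  have hjS : j ∈ {k | 2 * prefixOnes (unrot j y) k + 1 = k} := by
    have := pOne_unrot_le j hj y hb j (le_refl j)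
    simp only [Set.mem_setOf_eq]
    omega
  have h1 : jD (unrot j y) ≤ j := Nat.sInf_le hjS
  have h2 : jD (unrot j y) ∈ {k | 2 * prefixOnes (unrot j y) k + 1 = k} :=
    Nat.sInf_mem ⟨j, hjS⟩
  by_contra hne
  have hlt : jD (unrot j y) < j := by omega
  have h4 : 2 * prefixOnes (unrot j y) (jD (unrot j y)) + 1 = jD (unrot j y) := h2
  have h5 := pOne_unrot_le j hj y hb (jD (unrot j y)) (by omega)
  have h3 := hmin (jD (unrot j y) + 1) (by omega) (by omega)
  omega

/-- For every `n ≥ 1`, `|D_{2n}^{=0}(n)| = |D_{2n}^-(n)|`. -/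
theorem card_Dzero_eq_card_Dminus (n : ℕ) (hn : 1 ≤ n) :
    (Dzero n).card = (Dminus n).card := by
  refine Finset.card_bij' (fun y _ => unrot (rD y - 1) y) (fun x _ => rot (jD x) x)
    (fun y hy => G_mem hn y hy) (fun x hx => F_mem x hx) ?_ ?_
  · intro y hy
    show rot (jD (unrot (rD y - 1) y)) (unrot (rD y - 1) y) = y
    rw [jD_G hn y hy]
    obtain ⟨r, hr, hr2, hr3, -⟩ := Dzero_spec hn y hy
    have hlt : rD y - 1 < 2 * n := by omega
    exact rot_unrot _ hlt y
  · intro x hx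
    show unrot (rD (rot (jD x) x) - 1) (rot (jD x) x) = x
    have h : rD (rot (jD x) x) - 1 = jD x := by rw [rD_F x hx]; omega
    rw [h]
    obtain ⟨a, hja, ha1, ha2, -⟩ := Dminus_spec x hx
    have hlt : jD x < 2 * n := by omega
    exact unrot_rot _ hlt x
end

section
/- The mapping h on D_{2n}^{=0}(n), defined inductively by h(()) = () and h((1)∘x_ℓ∘(0)∘x_r) = (1)∘π(h(x_ℓ))∘(0)∘h(x_r) for the unique decomposition with x_ℓ ∈ D_{2k}^{=0}(k), is a well-defined bijection of D_{2n}^{=0}(n) onto itself. -/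
/-- Dyck-path bitstrings: balanced, and no prefix has more downsteps than upsteps. -/
def isDyck (l : List Bool) : Prop :=
  2 * l.count true = l.length ∧ ∀ p, p <+: l → p.length ≤ 2 * p.count true

/-- Swap consecutive pairs of elements of a list (a possible last unpaired element
stays in place). -/
def swapPairs : List Bool → List Bool
  | x :: y :: r => y :: x :: swapPairs r
  | l => l

/-- The permutation `π`: all adjacent pairs of bits are swapped, except that the first
and the last bit stay in place. -/
def piList : List Bool → List Bool
  | [] => []
  | a :: r => a :: swapPairs r

namespace DyckH

def bal (l : List Bool) : ℤ := 2 * l.count true - l.length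

@[simp] lemma bal_nil : bal [] = 0 := rfl

@[simp] lemma bal_cons_true (l : List Bool) : bal (true :: l) = 1 + bal l := by
  simp [bal, List.count_cons]; ring

@[simp] lemma bal_cons_false (l : List Bool) : bal (false :: l) = -1 + bal l := by
  simp [bal, List.count_cons]; ring

lemma bal_cons (x : Bool) (l : List Bool) :
    bal (x :: l) = (if x then 1 else -1) + bal l := by cases x <;> simp

lemma bal_append (a b : List Bool) : bal (a ++ b) = bal a + bal b := by
  simp [bal, List.count_append]; ring

lemma bal_emod (l : List Bool) : bal l % 2 = (l.length : ℤ) % 2 := by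
  unfold bal; omega

lemma isDyck_iff (l : List Bool) : isDyck l ↔ bal l = 0 ∧ ∀ k, 0 ≤ bal (l.take k) := by
  constructor
  · rintro ⟨h1, h2⟩
    refine ⟨by unfold bal; omega, fun k => ?_⟩
    have := h2 _ (l.take_prefix k)
    unfold bal; omega
  · rintro ⟨h1, h2⟩
    refine ⟨by unfold bal at h1; omega, fun p hp => ?_⟩
    have := h2 p.length
    rw [← List.prefix_iff_eq_take.mp hp] at this
    unfold bal at this; omega

@[simp] lemma swap_nil : swapPairs [] = [] := rfl
@[simp] lemma swap_single (x : Bool) : swapPairs [x] = [x] := rfl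
@[simp] lemma swap_cons2 (x y : Bool) (r : List Bool) :
    swapPairs (x :: y :: r) = y :: x :: swapPairs r := rfl

theorem swap_length : ∀ l : List Bool, (swapPairs l).length = l.length
  | [] => rfl
  | [_] => rfl
  | x :: y :: r => by simp [swap_length r]

theorem bal_swap : ∀ l : List Bool, bal (swapPairs l) = bal l
  | [] => rfl
  | [_] => rfl
  | x :: y :: r => by
      rw [swap_cons2, bal_cons, bal_cons, bal_cons, bal_cons, bal_swap r]; ring

theorem swap_invol : ∀ l : List Bool, swapPairs (swapPairs l) = l
  | [] => rfl
  | [_] => rfl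
  | x :: y :: r => by simp [swap_invol r]

@[simp] theorem pi_invol (l : List Bool) : piList (piList l) = l := by
  cases l <;> simp [piList, swap_invol]

theorem pi_length (l : List Bool) : (piList l).length = l.length := by
  cases l <;> simp [piList, swap_length]

-- even prefixes of swapPairs have the same balance
theorem bal_take_even : ∀ (k : ℕ) (r : List Bool),
    bal ((swapPairs r).take (2 * k)) = bal (r.take (2 * k))
  | 0, _ => by simp
  | _ + 1, [] => by simp
  | _ + 1, [_] => by simp
  | k + 1, x :: y :: r => by
      have h : 2 * (k + 1) = 2 * k + 1 + 1 := by ring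
      rw [swap_cons2, h, List.take_succ_cons, List.take_succ_cons,
        List.take_succ_cons, List.take_succ_cons, bal_cons, bal_cons, bal_cons, bal_cons,
        bal_take_even k r]
      ring

theorem bal_take_odd : ∀ (k : ℕ) (r : List Bool),
    bal (r.take (2 * k + 2)) - 1 ≤ bal ((swapPairs r).take (2 * k + 1))
  | _, [] => by simp
  | _, [x] => by cases x <;> simp
  | 0, x :: y :: r => by
      have h1 : (x :: y :: r).take 2 = [x, y] := rfl
      have h2 : (y :: x :: swapPairs r).take 1 = [y] := rfl
      rw [swap_cons2, h1, h2]
      cases x <;> cases y <;> simp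
  | k + 1, x :: y :: r => by
      have h1 : 2 * (k + 1) + 2 = 2 * k + 2 + 1 + 1 := by ring
      have h2 : 2 * (k + 1) + 1 = 2 * k + 1 + 1 + 1 := by ring
      rw [swap_cons2, h1, h2, List.take_succ_cons, List.take_succ_cons,
        List.take_succ_cons, List.take_succ_cons, bal_cons, bal_cons, bal_cons, bal_cons]
      have := bal_take_odd k r
      omega


lemma head_true {x : Bool} {t : List Bool} (h : isDyck (x :: t)) : x = true := by
  have := h.2 [x] ⟨t, rfl⟩
  cases x
  · simp at this
  · rfl

lemma take_bal_ge {l : List Bool} (h : isDyck l) (k : ℕ) : 0 ≤ bal (l.take k) :=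
  ((isDyck_iff l).mp h).2 k

theorem isDyck_pi {w : List Bool} (h : isDyck w) : isDyck (piList w) := by
  rcases w with _ | ⟨x, t⟩
  · exact h
  have hx := head_true h
  subst hx
  rw [isDyck_iff] at h ⊢
  obtain ⟨hb, ht⟩ := h
  have hbt : bal t = -1 := by rw [bal_cons_true] at hb; omega
  constructor
  · show bal (true :: swapPairs t) = 0
    rw [bal_cons_true, bal_swap, hbt]; ring
  · intro k
    match k with
    | 0 => simp [piList]
    | i + 1 =>
      show 0 ≤ bal ((true :: swapPairs t).take (i + 1))
      rw [List.take_succ_cons, bal_cons_true]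
      rcases Nat.even_or_odd i with ⟨m, hm⟩ | ⟨m, hm⟩
      · -- even
        have : bal ((swapPairs t).take i) = bal (t.take i) := by
          rw [hm, show m + m = 2 * m by ring, bal_take_even]
        rw [this]
        have h2 := ht (i + 1)
        rw [List.take_succ_cons, bal_cons_true] at h2
        omega
      · -- odd: i = 2m + 1
        by_cases hle : t.length ≤ i
        · rw [List.take_of_length_le (by rw [swap_length]; exact hle), bal_swap, hbt]
          norm_num
        · push_neg at hle
          have hU : bal (t.take (2 * m + 2)) - 1 ≤ bal ((swapPairs t).take (2 * m + 1)) :=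
            bal_take_odd m t
          have h2 := ht (i + 2)
          rw [List.take_succ_cons, bal_cons_true] at h2
          have hmod := bal_emod (t.take (i + 1))
          have hlen : (t.take (i + 1)).length = i + 1 := by
            rw [List.length_take]; omega
          rw [hlen] at hmod
          -- bal (t.take (i+1)) ≥ 0, parity: i+1 = 2m+2 even, and h2 : 0 ≤ 1 + bal (t.take (i+1))
          have hi1 : i + 1 = 2 * m + 2 := by omega
          rw [hi1] at h2 hmod
          rw [hm] at *
          have : 2 * m + 1 = m + 1 + m := by ring
          omega

theorem isDyck_compose {xl xr : List Bool} (h1 : isDyck xl) (h2 : isDyck xr) :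
    isDyck (true :: (xl ++ false :: xr)) := by
  rw [isDyck_iff] at h1 h2 ⊢
  obtain ⟨hb1, ht1⟩ := h1
  obtain ⟨hb2, ht2⟩ := h2
  constructor
  · rw [bal_cons_true, bal_append, bal_cons_false, hb1, hb2]; ring
  · intro k
    match k with
    | 0 => simp
    | i + 1 =>
      rw [List.take_succ_cons, bal_cons_true]
      by_cases hle : i ≤ xl.length
      · rw [List.take_append_of_le_length hle]
        have := ht1 i
        omega
      · push_neg at hle
        have hi : i = xl.length + (i - xl.length) := by omega
        rw [hi, List.take_length_add_append]
        obtain ⟨j, hj⟩ : ∃ j, i - xl.length = j + 1 := ⟨i - xl.length - 1, by omega⟩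
        rw [hj, List.take_succ_cons, bal_append, bal_cons_false, hb1]
        have := ht2 j
        omega


theorem decomp_unique {xl xr xl' xr' : List Bool} (h1 : isDyck xl) (h2 : isDyck xl')
    (he : xl ++ false :: xr = xl' ++ false :: xr') : xl = xl' ∧ xr = xr' := by
  have key : ∀ a b c d : List Bool, bal a = 0 → isDyck b →
      a ++ false :: c = b ++ false :: d → ¬ a.length < b.length := by
    intro a b c d ha hb habcd hlt
    have htake : (a ++ false :: c).take (a.length + 1) = a ++ [false] := by
      rw [List.take_length_add_append]; rfl
    have htake' : (b ++ false :: d).take (a.length + 1) = b.take (a.length + 1) := by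
      rw [List.take_append_of_le_length (by omega)]
    have heq : a ++ [false] = b.take (a.length + 1) := by
      rw [← htake, habcd, htake']
    have hbal := take_bal_ge hb (a.length + 1)
    rw [← heq, bal_append, ha] at hbal
    simp at hbal
  have hb1 : bal xl = 0 := ((isDyck_iff xl).mp h1).1
  have hb2 : bal xl' = 0 := ((isDyck_iff xl').mp h2).1
  have hlen : xl.length = xl'.length := by
    have k1 := key xl xl' xr xr' hb1 h2 he
    have k2 := key xl' xl xr' xr hb2 h1 he.symm
    omega
  obtain ⟨h3, h4⟩ := List.append_inj he hlen
  exact ⟨h3, by injection h4⟩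

theorem exists_decomp {l : List Bool} (hl : isDyck l) (hne : l ≠ []) :
    ∃ xl xr, isDyck xl ∧ isDyck xr ∧ l = true :: (xl ++ false :: xr) := by
  classical
  obtain ⟨x, t, rfl⟩ : ∃ x t, l = x :: t := by
    cases l with
    | nil => exact absurd rfl hne
    | cons x t => exact ⟨x, t, rfl⟩
  have hx := head_true hl
  subst hx
  set l : List Bool := true :: t with hldef
  have hl' := (isDyck_iff l).mp hl
  obtain ⟨hb, ht⟩ := hl'
  have hlen : 0 < l.length := by simp [hldef]
  have hP : ∃ k, 0 < k ∧ bal (l.take k) = 0 :=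
    ⟨l.length, hlen, by rw [List.take_length]; exact hb⟩
  obtain ⟨k, ⟨hk0, hkbal⟩, hmin⟩ :
      ∃ k, (0 < k ∧ bal (l.take k) = 0) ∧ ∀ j < k, ¬(0 < j ∧ bal (l.take j) = 0) :=
    ⟨Nat.find hP, Nat.find_spec hP, fun j hj => Nat.find_min hP hj⟩
  have hkle : k ≤ l.length := by
    by_contra hcon
    exact hmin l.length (by omega) ⟨hlen, by rw [List.take_length]; exact hb⟩
  have hA : ∀ j, 0 < j → j < k → 1 ≤ bal (l.take j) := by
    intro j hj hjk
    have hm := hmin j hjk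
    push_neg at hm
    have := ht j
    have := hm hj
    omega
  have hk1 : k ≠ 1 := by
    intro h
    rw [h, show l.take 1 = [true] from rfl] at hkbal
    simp at hkbal
  have hk2 : 2 ≤ k := by omega
  have hllen : l.length = t.length + 1 := rfl
  have hk1lt : k - 1 < l.length := by omega
  have hsucc : l.take k = l.take (k - 1) ++ (l[k-1]'hk1lt :: []) := by
    conv_lhs => rw [show k = (k - 1) + 1 by omega]
    rw [List.take_succ, List.getElem?_eq_getElem hk1lt]
    rfl
  have hAk1 : 1 ≤ bal (l.take (k - 1)) := hA (k - 1) (by omega) (by omega)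
  have hbt1 : bal ([true] : List Bool) = 1 := by simp
  have hbf1 : bal ([false] : List Bool) = -1 := by simp
  have hgf : l[k-1]'hk1lt = false ∧ bal (l.take (k - 1)) = 1 := by
    rw [hsucc, bal_append] at hkbal
    cases hg : l[k-1]'hk1lt
    · rw [hg, hbf1] at hkbal
      exact ⟨rfl, by omega⟩
    · exfalso
      rw [hg, hbt1] at hkbal
      omega
  have hstruct : l.take (k - 1) = true :: t.take (k - 2) := by
    rw [hldef, show k - 1 = (k - 2) + 1 by omega, List.take_succ_cons]
  refine ⟨t.take (k - 2), l.drop k, ?_, ?_, ?_⟩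
  · rw [isDyck_iff]
    constructor
    · have := hgf.2
      rw [hstruct, bal_cons_true] at this
      omega
    · intro j
      rw [List.take_take]
      set m := min j (k - 2) with hm
      have hm1 : 1 ≤ bal (l.take (m + 1)) := hA (m + 1) (by omega) (by omega)
      rw [hldef, List.take_succ_cons, bal_cons_true] at hm1
      omega
  · rw [isDyck_iff]
    constructor
    · have : bal (l.take k ++ l.drop k) = bal (l.take k) + bal (l.drop k) := bal_append _ _
      rw [List.take_append_drop] at this
      omega
    · intro j
      have h2 := ht (k + j)
      rw [List.take_add, bal_append, hkbal] at h2
      omega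
  · conv_lhs => rw [← List.take_append_drop k l]
    rw [hsucc, hgf.1, hstruct]
    simp


open Classical in
noncomputable def hAux : ℕ → List Bool → List Bool
  | 0, l => l
  | (m+1), l =>
    if hd : ∃ xl xr, isDyck xl ∧ isDyck xr ∧ l = true :: (xl ++ false :: xr)
    then true :: (piList (hAux m hd.choose) ++ false :: hAux m hd.choose_spec.choose)
    else l

open Classical in
noncomputable def gAux : ℕ → List Bool → List Bool
  | 0, l => l
  | (m+1), l =>
    if hd : ∃ xl xr, isDyck xl ∧ isDyck xr ∧ l = true :: (xl ++ false :: xr)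
    then true :: (gAux m (piList hd.choose) ++ false :: gAux m hd.choose_spec.choose)
    else l

lemma no_decomp_nil : ¬ ∃ xl xr, isDyck xl ∧ isDyck xr ∧
    ([] : List Bool) = true :: (xl ++ false :: xr) := by
  rintro ⟨xl, xr, -, -, h⟩
  simp at h

@[simp] lemma hAux_nil : ∀ m, hAux m [] = []
  | 0 => rfl
  | m + 1 => by rw [hAux, dif_neg no_decomp_nil]

@[simp] lemma gAux_nil : ∀ m, gAux m [] = []
  | 0 => rfl
  | m + 1 => by rw [gAux, dif_neg no_decomp_nil]

lemma choose_eq {xl xr : List Bool} (h1 : isDyck xl) (h2 : isDyck xr)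
    (hd : ∃ a b, isDyck a ∧ isDyck b ∧
      true :: (xl ++ false :: xr) = true :: (a ++ false :: b)) :
    hd.choose = xl ∧ hd.choose_spec.choose = xr := by
  obtain ⟨ha, hb, heq⟩ := hd.choose_spec.choose_spec
  have heq' : hd.choose ++ false :: hd.choose_spec.choose = xl ++ false :: xr := by
    injection heq.symm
  obtain ⟨e1, e2⟩ := decomp_unique ha h1 heq'
  exact ⟨e1, e2⟩

lemma hAux_succ {xl xr : List Bool} (m : ℕ) (h1 : isDyck xl) (h2 : isDyck xr) :
    hAux (m + 1) (true :: (xl ++ false :: xr))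
      = true :: (piList (hAux m xl) ++ false :: hAux m xr) := by
  have hd : ∃ a b, isDyck a ∧ isDyck b ∧
      true :: (xl ++ false :: xr) = true :: (a ++ false :: b) := ⟨xl, xr, h1, h2, rfl⟩
  rw [hAux, dif_pos hd]
  obtain ⟨e1, e2⟩ := choose_eq h1 h2 hd
  rw [e2, e1]

lemma gAux_succ {xl xr : List Bool} (m : ℕ) (h1 : isDyck xl) (h2 : isDyck xr) :
    gAux (m + 1) (true :: (xl ++ false :: xr))
      = true :: (gAux m (piList xl) ++ false :: gAux m xr) := by
  have hd : ∃ a b, isDyck a ∧ isDyck b ∧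
      true :: (xl ++ false :: xr) = true :: (a ++ false :: b) := ⟨xl, xr, h1, h2, rfl⟩
  rw [gAux, dif_pos hd]
  obtain ⟨e1, e2⟩ := choose_eq h1 h2 hd
  rw [e2, e1]


lemma hAux_stable : ∀ (m m' : ℕ) (l : List Bool),
    l.length ≤ m → l.length ≤ m' → hAux m l = hAux m' l := by
  intro m
  induction m with
  | zero =>
    intro m' l h _
    have : l = [] := List.eq_nil_of_length_eq_zero (by omega)
    subst this; simp
  | succ m ih =>
    intro m' l hm hm'
    rcases l with _ | ⟨x, t⟩
    · simp
    rcases m' with _ | m''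
    · simp at hm'
    rw [hAux, hAux]
    by_cases hd : ∃ xl xr, isDyck xl ∧ isDyck xr ∧ x :: t = true :: (xl ++ false :: xr)
    · rw [dif_pos hd, dif_pos hd]
      obtain ⟨h1, h2, heq⟩ := hd.choose_spec.choose_spec
      have hlen := congrArg List.length heq
      simp only [List.length_cons, List.length_append] at hlen hm hm'
      rw [ih m'' hd.choose (by omega) (by omega),
        ih m'' hd.choose_spec.choose (by omega) (by omega)]
    · rw [dif_neg hd, dif_neg hd]

lemma gAux_stable : ∀ (m m' : ℕ) (l : List Bool),
    l.length ≤ m → l.length ≤ m' → gAux m l = gAux m' l := by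
  intro m
  induction m with
  | zero =>
    intro m' l h _
    have : l = [] := List.eq_nil_of_length_eq_zero (by omega)
    subst this; simp
  | succ m ih =>
    intro m' l hm hm'
    rcases l with _ | ⟨x, t⟩
    · simp
    rcases m' with _ | m''
    · simp at hm'
    rw [gAux, gAux]
    by_cases hd : ∃ xl xr, isDyck xl ∧ isDyck xr ∧ x :: t = true :: (xl ++ false :: xr)
    · rw [dif_pos hd, dif_pos hd]
      obtain ⟨h1, h2, heq⟩ := hd.choose_spec.choose_spec
      have hlen := congrArg List.length heq
      simp only [List.length_cons, List.length_append] at hlen hm hm'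
      rw [ih m'' (piList hd.choose) (by rw [pi_length]; omega) (by rw [pi_length]; omega),
        ih m'' hd.choose_spec.choose (by omega) (by omega)]
    · rw [dif_neg hd, dif_neg hd]

noncomputable def hFun (l : List Bool) : List Bool := hAux l.length l
noncomputable def gFun (l : List Bool) : List Bool := gAux l.length l

@[simp] lemma hFun_nil : hFun [] = [] := rfl
@[simp] lemma gFun_nil : gFun [] = [] := rfl

lemma hFun_eq {xl xr : List Bool} (h1 : isDyck xl) (h2 : isDyck xr) :
    hFun (true :: (xl ++ false :: xr)) = true :: (piList (hFun xl) ++ false :: hFun xr) := by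
  unfold hFun
  have hl : (true :: (xl ++ false :: xr)).length = (xl.length + xr.length + 1) + 1 := by
    simp only [List.length_cons, List.length_append]; omega
  rw [hl, hAux_succ _ h1 h2,
    hAux_stable (xl.length + xr.length + 1) xl.length xl (by omega) le_rfl,
    hAux_stable (xl.length + xr.length + 1) xr.length xr (by omega) le_rfl]

lemma gFun_eq {xl xr : List Bool} (h1 : isDyck xl) (h2 : isDyck xr) :
    gFun (true :: (xl ++ false :: xr)) = true :: (gFun (piList xl) ++ false :: gFun xr) := by
  unfold gFun
  have hl : (true :: (xl ++ false :: xr)).length = (xl.length + xr.length + 1) + 1 := by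
    simp only [List.length_cons, List.length_append]; omega
  rw [hl, gAux_succ _ h1 h2,
    gAux_stable (xl.length + xr.length + 1) (piList xl).length (piList xl)
      (by rw [pi_length]; omega) le_rfl,
    gAux_stable (xl.length + xr.length + 1) xr.length xr (by omega) le_rfl]

lemma hFun_dyck : ∀ (n : ℕ) (l : List Bool), l.length ≤ n → isDyck l →
    isDyck (hFun l) ∧ (hFun l).length = l.length := by
  intro n
  induction n with
  | zero =>
    intro l h hd
    have : l = [] := List.eq_nil_of_length_eq_zero (by omega)
    subst this; exact ⟨hd, rfl⟩
  | succ n ih =>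
    intro l hlen hd
    rcases eq_or_ne l [] with rfl | hne
    · exact ⟨hd, rfl⟩
    obtain ⟨xl, xr, h1, h2, rfl⟩ := exists_decomp hd hne
    simp only [List.length_cons, List.length_append] at hlen
    obtain ⟨d1, l1⟩ := ih xl (by omega) h1
    obtain ⟨d2, l2⟩ := ih xr (by omega) h2
    rw [hFun_eq h1 h2]
    refine ⟨isDyck_compose (isDyck_pi d1) d2, ?_⟩
    simp only [List.length_cons, List.length_append, pi_length, l1, l2]

lemma gFun_dyck : ∀ (n : ℕ) (l : List Bool), l.length ≤ n → isDyck l →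
    isDyck (gFun l) ∧ (gFun l).length = l.length := by
  intro n
  induction n with
  | zero =>
    intro l h hd
    have : l = [] := List.eq_nil_of_length_eq_zero (by omega)
    subst this; exact ⟨hd, rfl⟩
  | succ n ih =>
    intro l hlen hd
    rcases eq_or_ne l [] with rfl | hne
    · exact ⟨hd, rfl⟩
    obtain ⟨xl, xr, h1, h2, rfl⟩ := exists_decomp hd hne
    simp only [List.length_cons, List.length_append] at hlen
    obtain ⟨d1, l1⟩ := ih (piList xl) (by rw [pi_length]; omega) (isDyck_pi h1)
    obtain ⟨d2, l2⟩ := ih xr (by omega) h2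
    rw [gFun_eq h1 h2]
    refine ⟨isDyck_compose d1 d2, ?_⟩
    simp only [List.length_cons, List.length_append, l1, l2, pi_length]

lemma gh : ∀ (n : ℕ) (l : List Bool), l.length ≤ n → isDyck l → gFun (hFun l) = l := by
  intro n
  induction n with
  | zero =>
    intro l h hd
    have : l = [] := List.eq_nil_of_length_eq_zero (by omega)
    subst this; simp
  | succ n ih =>
    intro l hlen hd
    rcases eq_or_ne l [] with rfl | hne
    · simp
    obtain ⟨xl, xr, h1, h2, rfl⟩ := exists_decomp hd hne
    simp only [List.length_cons, List.length_append] at hlen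
    have hd1 := (hFun_dyck xl.length xl le_rfl h1).1
    have hd2 := (hFun_dyck xr.length xr le_rfl h2).1
    rw [hFun_eq h1 h2, gFun_eq (isDyck_pi hd1) hd2, pi_invol,
      ih xl (by omega) h1, ih xr (by omega) h2]

lemma hg : ∀ (n : ℕ) (l : List Bool), l.length ≤ n → isDyck l → hFun (gFun l) = l := by
  intro n
  induction n with
  | zero =>
    intro l h hd
    have : l = [] := List.eq_nil_of_length_eq_zero (by omega)
    subst this; simp
  | succ n ih =>
    intro l hlen hd
    rcases eq_or_ne l [] with rfl | hne
    · simp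
    obtain ⟨xl, xr, h1, h2, rfl⟩ := exists_decomp hd hne
    simp only [List.length_cons, List.length_append] at hlen
    have hd1 := (gFun_dyck (piList xl).length (piList xl) le_rfl (isDyck_pi h1)).1
    have hd2 := (gFun_dyck xr.length xr le_rfl h2).1
    rw [gFun_eq h1 h2, hFun_eq hd1 hd2,
      ih (piList xl) (by rw [pi_length]; omega) (isDyck_pi h1),
      ih xr (by omega) h2, pi_invol]

end DyckH

/-- The mapping `h`, defined inductively by `h(()) = ()` and
`h((1)∘x_ℓ∘(0)∘x_r) = (1)∘π(h(x_ℓ))∘(0)∘h(x_r)` for the unique decomposition of a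
nonempty Dyck path, is a well-defined bijection of `D_{2n}^{=0}(n)` onto itself. -/
theorem h_exists_and_bijective :
    ∃ h : List Bool → List Bool,
      h [] = [] ∧
      (∀ xl xr, isDyck xl → isDyck xr →
        h (true :: (xl ++ false :: xr)) = true :: (piList (h xl) ++ false :: h xr)) ∧
      (∀ n : ℕ, Set.BijOn h {l | isDyck l ∧ l.length = 2 * n}
        {l | isDyck l ∧ l.length = 2 * n}) := by
  refine ⟨DyckH.hFun, rfl, fun xl xr h1 h2 => DyckH.hFun_eq h1 h2, fun n => ⟨?_, ?_, ?_⟩⟩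
  · rintro x ⟨hd, hl⟩
    obtain ⟨d, e⟩ := DyckH.hFun_dyck x.length x le_rfl hd
    exact ⟨d, by rw [e, hl]⟩
  · rintro a ⟨ha, -⟩ b ⟨hb, -⟩ heq
    have := DyckH.gh a.length a le_rfl ha
    rw [← this, heq, DyckH.gh b.length b le_rfl hb]
  · rintro y ⟨hy, hl⟩
    obtain ⟨d, e⟩ := DyckH.gFun_dyck y.length y le_rfl hy
    exact ⟨DyckH.gFun y, ⟨d, by rw [e, hl]⟩, DyckH.hg y.length y le_rfl hy⟩
end

section
/- If G is a graph, 𝒞 a 2-factor of G, C and C' two distinct cycles of 𝒞, (P,P') a flippable pair of paths with P contained in C and P' contained in C', and (R,R') a corresponding flipped pair, then replacing P and P' by R and R' in 𝒞 yields again a 2-factor of G in which the cycles C and C' are joined into a single cycle, and all other cycles of 𝒞 are unchanged. -/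
open SimpleGraph

namespace FlipAux

variable {V : Type*}

/-- membership of an incident edge forces support membership -/
lemma not_mem_edges_of_not_mem_support {G : SimpleGraph V} {x y u v : V}
    (W : G.Walk u v) (hx : x ∉ W.support) : s(x, y) ∉ W.edges := fun h =>
  hx (W.fst_mem_support_of_mem_edges h)

/-- Incidence structure of a path at a vertex of its support. -/
lemma walk_incidence {G : SimpleGraph V} : ∀ {x y : V} (W : G.Walk x y),
    W.IsPath → ∀ (v : V), v ∈ W.support →
    (v = x ∧ v = y ∧ ∀ w, s(v, w) ∉ W.edges) ∨
    (v = x ∧ v ≠ y ∧ ∃ u, ∀ w, (s(v, w) ∈ W.edges ↔ w = u)) ∨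
    (v ≠ x ∧ v = y ∧ ∃ u, ∀ w, (s(v, w) ∈ W.edges ↔ w = u)) ∨
    (v ≠ x ∧ v ≠ y ∧ ∃ u u', u ≠ u' ∧ ∀ w, (s(v, w) ∈ W.edges ↔ (w = u ∨ w = u'))) := by
  intro x y W
  induction W with
  | nil =>
    intro _ v hv
    simp only [SimpleGraph.Walk.support_nil, List.mem_singleton] at hv
    subst hv
    exact Or.inl ⟨rfl, rfl, by simp⟩
  | @cons x u₀ y h W' ih =>
    intro hW v hv
    rw [SimpleGraph.Walk.cons_isPath_iff] at hW
    obtain ⟨hW', hxW'⟩ := hW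
    have hy : y ∈ W'.support := W'.end_mem_support
    by_cases hvx : v = x
    · subst hvx
      have hvy : v ≠ y := fun hh => hxW' (hh ▸ hy)
      refine Or.inr (Or.inl ⟨rfl, hvy, u₀, fun w => ?_⟩)
      constructor
      · intro hw
        rw [SimpleGraph.Walk.edges_cons, List.mem_cons] at hw
        rcases hw with hw | hw
        · rw [Sym2.eq_iff] at hw
          rcases hw with ⟨_, hw⟩ | ⟨hw, _⟩
          · exact hw
          · exact absurd hw h.ne
        · exact absurd (W'.fst_mem_support_of_mem_edges hw) hxW'
      · rintro rfl
        rw [SimpleGraph.Walk.edges_cons]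
        exact List.mem_cons_self
    · have hv' : v ∈ W'.support := by
        rcases (SimpleGraph.Walk.mem_support_iff _).mp hv with h1 | h1
        · exact absurd h1 hvx
        · rwa [SimpleGraph.Walk.support_cons, List.tail_cons] at h1
      rcases ih hW' v hv' with ⟨h1, h2, h3⟩ | ⟨h1, h2, u, h3⟩ | ⟨h1, h2, u, h3⟩ |
          ⟨h1, h2, u, u', hne, h3⟩
      · -- v = u₀ = y, no W'-edges; in cons, one edge s(x,u₀)
        subst h1; subst h2
        refine Or.inr (Or.inr (Or.inl ⟨hvx, rfl, x, fun w => ?_⟩))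
        rw [SimpleGraph.Walk.edges_cons, List.mem_cons]
        constructor
        · rintro (hw | hw)
          · rw [Sym2.eq_iff] at hw
            rcases hw with ⟨hw, _⟩ | ⟨_, hw⟩
            · exact absurd hw hvx
            · exact hw
          · exact absurd hw (h3 w)
        · rintro rfl
          left
          rw [Sym2.eq_iff]
          exact Or.inr ⟨rfl, rfl⟩
      · -- v = u₀ ≠ y, unique W'-edge to u; plus s(x,u₀)
        subst h1
        refine Or.inr (Or.inr (Or.inr ⟨hvx, h2, x, u, ?_, fun w => ?_⟩))
        · intro hxu
          exact hxW' (hxu ▸ W'.snd_mem_support_of_mem_edges ((h3 u).mpr rfl))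
        · rw [SimpleGraph.Walk.edges_cons, List.mem_cons]
          constructor
          · rintro (hw | hw)
            · rw [Sym2.eq_iff] at hw
              rcases hw with ⟨hw, _⟩ | ⟨_, hw⟩
              · exact absurd hw hvx
              · exact Or.inl hw
            · exact Or.inr ((h3 w).mp hw)
          · rintro (rfl | rfl)
            · left; rw [Sym2.eq_iff]; exact Or.inr ⟨rfl, rfl⟩
            · exact Or.inr ((h3 _).mpr rfl)
      · -- v ≠ u₀, v = y, unique edge u
        refine Or.inr (Or.inr (Or.inl ⟨hvx, h2, u, fun w => ?_⟩))
        rw [SimpleGraph.Walk.edges_cons, List.mem_cons]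
        constructor
        · rintro (hw | hw)
          · rw [Sym2.eq_iff] at hw
            rcases hw with ⟨hw, _⟩ | ⟨hw, _⟩
            · exact absurd hw hvx
            · exact absurd hw h1
          · exact (h3 w).mp hw
        · intro hw
          exact Or.inr ((h3 w).mpr hw)
      · -- interior of W'
        refine Or.inr (Or.inr (Or.inr ⟨hvx, h2, u, u', hne, fun w => ?_⟩))
        rw [SimpleGraph.Walk.edges_cons, List.mem_cons]
        constructor
        · rintro (hw | hw)
          · rw [Sym2.eq_iff] at hw
            rcases hw with ⟨hw, _⟩ | ⟨hw, _⟩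
            · exact absurd hw hvx
            · exact absurd hw h1
          · exact (h3 w).mp hw
        · intro hw
          exact Or.inr ((h3 w).mpr hw)

/-- Unique incident edge at the first vertex of a nontrivial path. -/
lemma endpoint_unique {G : SimpleGraph V} {x y : V} (W : G.Walk x y) (hW : W.IsPath)
    (hxy : x ≠ y) : ∃ p, ∀ w, (s(x, w) ∈ W.edges ↔ w = p) := by
  rcases walk_incidence W hW x W.start_mem_support with ⟨_, h, _⟩ | ⟨_, _, u, h⟩ |
      ⟨h, _, _⟩ | ⟨h, _, _⟩
  · exact absurd h hxy
  · exact ⟨u, h⟩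
  · exact absurd rfl h
  · exact absurd rfl h

/-- Two incident edges at an interior vertex of a path. -/
lemma interior_edges {G : SimpleGraph V} {x y : V} (W : G.Walk x y) (hW : W.IsPath)
    {v : V} (hv : v ∈ W.support) (hvx : v ≠ x) (hvy : v ≠ y) :
    ∃ u u', u ≠ u' ∧ ∀ w, (s(v, w) ∈ W.edges ↔ (w = u ∨ w = u')) := by
  rcases walk_incidence W hW v hv with ⟨h, _⟩ | ⟨h, _⟩ | ⟨_, h, _⟩ | ⟨_, _, u, u', h1, h2⟩
  · exact absurd h hvx
  · exact absurd h hvx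
  · exact absurd h hvy
  · exact ⟨u, u', h1, h2⟩

/-- In a 2-regular graph, two distinct neighbours are all the neighbours. -/
lemma neighbors_eq_pair [Fintype V] {F : SimpleGraph V}
    (hreg : ∀ v, (F.neighborSet v).ncard = 2) {v u u' : V} (h : F.Adj v u)
    (h' : F.Adj v u') (hne : u ≠ u') : ∀ w, (F.Adj v w ↔ (w = u ∨ w = u')) := by
  have hsub : ({u, u'} : Set V) ⊆ F.neighborSet v := by
    rintro w (rfl | rfl)
    exacts [h, h']
  have := Set.eq_of_subset_of_ncard_le hsub
    (by rw [hreg v, Set.ncard_pair hne]) (Set.toFinite _)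
  intro w
  constructor
  · intro hw
    have : w ∈ ({u, u'} : Set V) := this ▸ hw
    simpa using this
  · rintro (rfl | rfl)
    exacts [h, h']

/-- In a 2-regular graph, a neighbour has exactly one companion. -/
lemma other_neighbor [Fintype V] {F : SimpleGraph V}
    (hreg : ∀ v, (F.neighborSet v).ncard = 2) {v p : V} (h : F.Adj v p) :
    ∃ q, q ≠ p ∧ ∀ w, (F.Adj v w ↔ (w = p ∨ w = q)) := by
  obtain ⟨x, y, hxy, hset⟩ := Set.ncard_eq_two.mp (hreg v)
  have hp : p ∈ ({x, y} : Set V) := hset ▸ h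
  have hiff : ∀ w, F.Adj v w ↔ w ∈ ({x, y} : Set V) := fun w => by
    rw [← hset]; rfl
  rcases hp with rfl | rfl
  · exact ⟨y, fun hh => hxy hh.symm, fun w => by rw [hiff w]; simp⟩
  · refine ⟨x, fun hh => hxy hh, fun w => ?_⟩
    rw [hiff w]
    constructor
    · rintro (rfl | rfl)
      exacts [Or.inr rfl, Or.inl rfl]
    · rintro (rfl | rfl)
      exacts [Or.inr rfl, Or.inl rfl]

/-- Walk transfer along an invariant. -/
lemma walk_invariant_reach {A B : SimpleGraph V} (Q : V → Prop)
    (hstep : ∀ x y, Q x → A.Adj x y → B.Adj x y ∧ Q y) :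
    ∀ {v z : V}, Q v → A.Walk v z → B.Reachable v z := by
  intro v z hv W
  induction W with
  | nil => exact Reachable.refl _
  | cons h p ihp => exact ((hstep _ _ hv h).1.reachable).trans (ihp (hstep _ _ hv h).2)

end FlipAux

namespace FlipAux2
open FlipAux

lemma ncard_neighborSet_eq_degree {V : Type*} [Fintype V] (K : SimpleGraph V)
    [DecidableRel K.Adj] (v : V) : (K.neighborSet v).ncard = K.degree v := by
  rw [Set.ncard_eq_toFinset_card', ← SimpleGraph.neighborFinset_def]
  rfl

/-- Handshake argument: if `a` has exactly one `F₂`-neighbour, and every vertex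
`F`-reachable from `a` other than `a, b` has an even number of `F₂`-neighbours,
then `b` is `F₂`-reachable from `a`. -/
lemma reach_endpoints {V : Type*} [Fintype V] (F F₂ : SimpleGraph V) (hle : F₂ ≤ F)
    (a b : V)
    (hdega : (F₂.neighborSet a).ncard = 1)
    (hother : ∀ w, F.Reachable a w → w ≠ a → w ≠ b →
      ¬ Odd ((F₂.neighborSet w).ncard)) :
    F₂.Reachable a b := by
  classical
  let K : SimpleGraph V :=
    ⟨fun x y => F₂.Adj x y ∧ F₂.Reachable a x ∧ F₂.Reachable a y,
      ⟨fun x y h => ⟨h.1.symm, h.2.2, h.2.1⟩⟩,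
      ⟨fun x h => F₂.loopless.irrefl x h.1⟩⟩
  have hNK : ∀ x, F₂.Reachable a x → K.neighborSet x = F₂.neighborSet x := by
    intro x hx
    ext y
    constructor
    · intro hy
      exact hy.1
    · intro hy
      exact ⟨hy, hx, hx.trans hy.reachable⟩
  have hNK0 : ∀ x, ¬ F₂.Reachable a x → K.neighborSet x = ∅ := by
    intro x hx
    ext y
    simp only [Set.mem_empty_iff_false, iff_false]
    intro hy
    exact hx hy.2.1
  have hdegKa : K.degree a = 1 := by
    rw [← ncard_neighborSet_eq_degree, hNK a (Reachable.refl a), hdega]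
  have hodd := SimpleGraph.odd_card_odd_degree_vertices_ne K a (hdegKa ▸ odd_one)
  have hne : (Finset.filter (fun w => w ≠ a ∧ Odd (K.degree w)) Finset.univ).Nonempty := by
    rw [← Finset.card_pos]
    rcases hodd with ⟨k, hk⟩
    omega
  obtain ⟨w, hw⟩ := hne
  rw [Finset.mem_filter] at hw
  obtain ⟨-, hwa, hwodd⟩ := hw
  have hreach : F₂.Reachable a w := by
    by_contra hnr
    rw [← ncard_neighborSet_eq_degree, hNK0 w hnr] at hwodd
    simp at hwodd
  rw [← ncard_neighborSet_eq_degree, hNK w hreach] at hwodd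
  by_cases hwb : w = b
  · exact hwb ▸ hreach
  · exact absurd hwodd (hother w (hreach.mono hle) hwa hwb)

end FlipAux2

open FlipAux FlipAux2



/-- **Flipping a pair of paths in a 2-factor.**
A 2-factor of `G` is formalized as a spanning 2-regular subgraph `F ≤ G`; its cycles
are the connected components of `F`.  `C` and `C'` are two distinct cycles of the
2-factor, `(P,P')` is a flippable pair of (oriented, vertex-disjoint) paths with `P`
contained in `C` and `P'` contained in `C'`, and `(R,R')` is a corresponding flipped
pair: `R, R'` are vertex-disjoint paths in `G` with
`V(P) ∪ V(P') = V(R) ∪ V(R')`, `F(P) = F(R) = a`, `F(P') = F(R') = a'`,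
`L(P) = L(R') = b`, `L(P') = L(R) = b'`.
Replacing the edges of `P` and `P'` by those of `R` and `R'` yields again a 2-factor
of `G` in which the cycles `C` and `C'` are joined into a single cycle, while all
other cycles are unchanged. -/
theorem flip_pair_of_paths {V : Type*} [Fintype V] (G F : SimpleGraph V)
    (hFG : F ≤ G)
    (hreg : ∀ v, (F.neighborSet v).ncard = 2)
    (c c' : F.ConnectedComponent) (hcc : c ≠ c')
    {a b a' b' : V}
    (P : G.Walk a b) (P' : G.Walk a' b') (R : G.Walk a b') (R' : G.Walk a' b)
    (hP : P.IsPath) (hP' : P'.IsPath) (hR : R.IsPath) (hR' : R'.IsPath)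
    (hPF : ∀ e ∈ P.edges, e ∈ F.edgeSet) (hP'F : ∀ e ∈ P'.edges, e ∈ F.edgeSet)
    (hPc : ∀ v ∈ P.support, F.connectedComponentMk v = c)
    (hP'c : ∀ v ∈ P'.support, F.connectedComponentMk v = c')
    (hPP' : ∀ v ∈ P.support, v ∉ P'.support)
    (hRR' : ∀ v ∈ R.support, v ∉ R'.support)
    (hV : {v | v ∈ P.support} ∪ {v | v ∈ P'.support} =
          ({v | v ∈ R.support} ∪ {v | v ∈ R'.support} : Set V)) :
    F.edgeSet \ ({e | e ∈ P.edges} ∪ {e | e ∈ P'.edges}) ∪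
        ({e | e ∈ R.edges} ∪ {e | e ∈ R'.edges}) =
      (SimpleGraph.fromEdgeSet
        (F.edgeSet \ ({e | e ∈ P.edges} ∪ {e | e ∈ P'.edges}) ∪
          ({e | e ∈ R.edges} ∪ {e | e ∈ R'.edges}))).edgeSet ∧
    (SimpleGraph.fromEdgeSet
        (F.edgeSet \ ({e | e ∈ P.edges} ∪ {e | e ∈ P'.edges}) ∪
          ({e | e ∈ R.edges} ∪ {e | e ∈ R'.edges}))) ≤ G ∧
    (∀ v, ((SimpleGraph.fromEdgeSet
        (F.edgeSet \ ({e | e ∈ P.edges} ∪ {e | e ∈ P'.edges}) ∪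
          ({e | e ∈ R.edges} ∪ {e | e ∈ R'.edges}))).neighborSet v).ncard = 2) ∧
    (∀ v w, (F.connectedComponentMk v = c ∨ F.connectedComponentMk v = c') →
      (F.connectedComponentMk w = c ∨ F.connectedComponentMk w = c') →
      (SimpleGraph.fromEdgeSet
        (F.edgeSet \ ({e | e ∈ P.edges} ∪ {e | e ∈ P'.edges}) ∪
          ({e | e ∈ R.edges} ∪ {e | e ∈ R'.edges}))).Reachable v w) ∧
    (∀ v, F.connectedComponentMk v ≠ c → F.connectedComponentMk v ≠ c' →
      ∀ w, ((SimpleGraph.fromEdgeSet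
        (F.edgeSet \ ({e | e ∈ P.edges} ∪ {e | e ∈ P'.edges}) ∪
          ({e | e ∈ R.edges} ∪ {e | e ∈ R'.edges}))).Reachable v w ↔
        F.Reachable v w)) := by
  classical
  set S : Set (Sym2 V) := F.edgeSet \ ({e | e ∈ P.edges} ∪ {e | e ∈ P'.edges}) ∪
    ({e | e ∈ R.edges} ∪ {e | e ∈ R'.edges}) with hSdef
  set H := SimpleGraph.fromEdgeSet S with hHdef
  -- basic membership facts
  have haP : a ∈ P.support := P.start_mem_support
  have hbP : b ∈ P.support := P.end_mem_support
  have ha'P' : a' ∈ P'.support := P'.start_mem_support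
  have hb'P' : b' ∈ P'.support := P'.end_mem_support
  have haR : a ∈ R.support := R.start_mem_support
  have hb'R : b' ∈ R.support := R.end_mem_support
  have ha'R' : a' ∈ R'.support := R'.start_mem_support
  have hbR' : b ∈ R'.support := R'.end_mem_support
  have hca : F.connectedComponentMk a = c := hPc a haP
  have hcb : F.connectedComponentMk b = c := hPc b hbP
  have hc'a' : F.connectedComponentMk a' = c' := hP'c a' ha'P'
  have hc'b' : F.connectedComponentMk b' = c' := hP'c b' hb'P'
  have hQ : ∀ x y, F.Adj x y →
      F.connectedComponentMk x = F.connectedComponentMk y :=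
    fun x y h => SimpleGraph.ConnectedComponent.eq.mpr h.reachable
  have hcc' : ∀ x y, F.connectedComponentMk x = c → F.connectedComponentMk y = c' →
      x ≠ y := by
    rintro x y h1 h2 rfl
    exact hcc (h1.symm.trans h2)
  have hab : a ≠ b := by
    rintro rfl
    exact hRR' a haR hbR'
  have ha'b' : a' ≠ b' := by
    rintro rfl
    exact hRR' a' hb'R ha'R'
  have hab' : a ≠ b' := hcc' a b' hca hc'b'
  have hba' : b ≠ a' := fun h => hcc' b a' hcb hc'a' h
  -- support transfer along hV
  have hsupPR : ∀ v, v ∈ P.support → v ∈ R.support ∨ v ∈ R'.support := by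
    intro v hv
    have : v ∈ ({v | v ∈ R.support} ∪ {v | v ∈ R'.support} : Set V) := by
      rw [← hV]; exact Or.inl hv
    exact this
  have hsupP'R : ∀ v, v ∈ P'.support → v ∈ R.support ∨ v ∈ R'.support := by
    intro v hv
    have : v ∈ ({v | v ∈ R.support} ∪ {v | v ∈ R'.support} : Set V) := by
      rw [← hV]; exact Or.inr hv
    exact this
  have hsupRP : ∀ v, v ∈ R.support → v ∈ P.support ∨ v ∈ P'.support := by
    intro v hv
    have : v ∈ ({v | v ∈ P.support} ∪ {v | v ∈ P'.support} : Set V) := by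
      rw [hV]; exact Or.inl hv
    exact this
  have hsupR'P : ∀ v, v ∈ R'.support → v ∈ P.support ∨ v ∈ P'.support := by
    intro v hv
    have : v ∈ ({v | v ∈ P.support} ∪ {v | v ∈ P'.support} : Set V) := by
      rw [hV]; exact Or.inr hv
    exact this
  have hclassP : ∀ v, F.connectedComponentMk v = c →
      v ∈ P.support ∨ v ∈ P'.support → v ∈ P.support := by
    rintro v h (h1 | h1)
    · exact h1
    · exact absurd (h.symm.trans (hP'c v h1)) hcc
  have hclassP' : ∀ v, F.connectedComponentMk v = c' →
      v ∈ P.support ∨ v ∈ P'.support → v ∈ P'.support := by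
    rintro v h (h1 | h1)
    · exact absurd ((hPc v h1).symm.trans h) hcc
    · exact h1
  -- the adjacency of H
  have hH : ∀ v w, H.Adj v w ↔
      ((F.Adj v w ∧ s(v, w) ∉ P.edges ∧ s(v, w) ∉ P'.edges) ∨
        s(v, w) ∈ R.edges ∨ s(v, w) ∈ R'.edges) := by
    intro v w
    rw [hHdef, SimpleGraph.fromEdgeSet_adj, hSdef]
    simp only [Set.mem_union, Set.mem_diff, Set.mem_setOf_eq, SimpleGraph.mem_edgeSet]
    constructor
    · rintro ⟨(⟨h1, h2⟩ | (h | h)), -⟩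
      · exact Or.inl ⟨h1, fun hh => h2 (Or.inl hh), fun hh => h2 (Or.inr hh)⟩
      · exact Or.inr (Or.inl h)
      · exact Or.inr (Or.inr h)
    · rintro (⟨h1, h2, h3⟩ | h | h)
      · exact ⟨Or.inl ⟨h1, fun hh => hh.elim h2 h3⟩, h1.ne⟩
      · exact ⟨Or.inr (Or.inl h), (R.adj_of_mem_edges h).ne⟩
      · exact ⟨Or.inr (Or.inr h), (R'.adj_of_mem_edges h).ne⟩
  -- endpoint data
  obtain ⟨pa, hPa⟩ := endpoint_unique P hP hab
  obtain ⟨qa, hqa, hFa⟩ := other_neighbor hreg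
    ((SimpleGraph.mem_edgeSet F).mp (hPF _ ((hPa pa).mpr rfl)))
  obtain ⟨pb, hPb0⟩ := endpoint_unique P.reverse hP.reverse hab.symm
  have hPb : ∀ w, (s(b, w) ∈ P.edges ↔ w = pb) := by
    intro w
    rw [← hPb0 w, SimpleGraph.Walk.edges_reverse, List.mem_reverse]
  obtain ⟨qb, hqb, hFb⟩ := other_neighbor hreg
    ((SimpleGraph.mem_edgeSet F).mp (hPF _ ((hPb pb).mpr rfl)))
  obtain ⟨pa', hPa'⟩ := endpoint_unique P' hP' ha'b'
  obtain ⟨qa', hqa', hFa'⟩ := other_neighbor hreg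
    ((SimpleGraph.mem_edgeSet F).mp (hP'F _ ((hPa' pa').mpr rfl)))
  obtain ⟨pb', hPb'0⟩ := endpoint_unique P'.reverse hP'.reverse ha'b'.symm
  have hPb' : ∀ w, (s(b', w) ∈ P'.edges ↔ w = pb') := by
    intro w
    rw [← hPb'0 w, SimpleGraph.Walk.edges_reverse, List.mem_reverse]
  obtain ⟨qb', hqb', hFb'⟩ := other_neighbor hreg
    ((SimpleGraph.mem_edgeSet F).mp (hP'F _ ((hPb' pb').mpr rfl)))
  obtain ⟨ra, hRa⟩ := endpoint_unique R hR hab'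
  obtain ⟨rb', hRb'0⟩ := endpoint_unique R.reverse hR.reverse hab'.symm
  have hRb' : ∀ w, (s(b', w) ∈ R.edges ↔ w = rb') := by
    intro w
    rw [← hRb'0 w, SimpleGraph.Walk.edges_reverse, List.mem_reverse]
  obtain ⟨ra', hRa'⟩ := endpoint_unique R' hR' hba'.symm
  obtain ⟨rb, hRb0⟩ := endpoint_unique R'.reverse hR'.reverse hba'
  have hRb : ∀ w, (s(b, w) ∈ R'.edges ↔ w = rb) := by
    intro w
    rw [← hRb0 w, SimpleGraph.Walk.edges_reverse, List.mem_reverse]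
  -- interior data
  have hintP : ∀ v, v ∈ P.support → v ≠ a → v ≠ b →
      ∃ u u', u ≠ u' ∧ (∀ w, (s(v, w) ∈ P.edges ↔ (w = u ∨ w = u'))) ∧
        (∀ w, (F.Adj v w ↔ (w = u ∨ w = u'))) := by
    intro v hv h1 h2
    obtain ⟨u, u', hne, hiff⟩ := interior_edges P hP hv h1 h2
    exact ⟨u, u', hne, hiff, neighbors_eq_pair hreg
      ((SimpleGraph.mem_edgeSet F).mp (hPF _ ((hiff u).mpr (Or.inl rfl))))
      ((SimpleGraph.mem_edgeSet F).mp (hPF _ ((hiff u').mpr (Or.inr rfl)))) hne⟩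
  have hintP' : ∀ v, v ∈ P'.support → v ≠ a' → v ≠ b' →
      ∃ u u', u ≠ u' ∧ (∀ w, (s(v, w) ∈ P'.edges ↔ (w = u ∨ w = u'))) ∧
        (∀ w, (F.Adj v w ↔ (w = u ∨ w = u'))) := by
    intro v hv h1 h2
    obtain ⟨u, u', hne, hiff⟩ := interior_edges P' hP' hv h1 h2
    exact ⟨u, u', hne, hiff, neighbors_eq_pair hreg
      ((SimpleGraph.mem_edgeSet F).mp (hP'F _ ((hiff u).mpr (Or.inl rfl))))
      ((SimpleGraph.mem_edgeSet F).mp (hP'F _ ((hiff u').mpr (Or.inr rfl)))) hne⟩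
  have hintR : ∀ v, v ∈ R.support → v ≠ a → v ≠ b' →
      ∃ u u', u ≠ u' ∧ ∀ w, (s(v, w) ∈ R.edges ↔ (w = u ∨ w = u')) :=
    fun v hv h1 h2 => interior_edges R hR hv h1 h2
  have hintR' : ∀ v, v ∈ R'.support → v ≠ a' → v ≠ b →
      ∃ u u', u ≠ u' ∧ ∀ w, (s(v, w) ∈ R'.edges ↔ (w = u ∨ w = u')) :=
    fun v hv h1 h2 => interior_edges R' hR' hv h1 h2
  -- the only F-edge within the support of P that is not an edge of P is {a,b}
  have hextra : ∀ x y, F.Adj x y → x ∈ P.support → y ∈ P.support →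
      s(x, y) ∉ P.edges → ((x = a ∧ y = b) ∨ (x = b ∧ y = a)) := by
    intro x y hadj hx hy hne
    have hxab : x = a ∨ x = b := by
      by_contra hcon
      push_neg at hcon
      obtain ⟨u, u', -, hiff, hFiff⟩ := hintP x hx hcon.1 hcon.2
      exact hne ((hiff y).mpr ((hFiff y).mp hadj))
    have hyab : y = a ∨ y = b := by
      by_contra hcon
      push_neg at hcon
      obtain ⟨u, u', -, hiff, hFiff⟩ := hintP y hy hcon.1 hcon.2
      exact hne (by rw [Sym2.eq_swap]; exact (hiff x).mpr ((hFiff x).mp hadj.symm))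
    rcases hxab with rfl | rfl <;> rcases hyab with h | h
    · exact absurd h.symm hadj.ne
    · exact Or.inl ⟨rfl, h⟩
    · exact Or.inr ⟨rfl, h⟩
    · exact absurd h.symm hadj.ne
  have hextra' : ∀ x y, F.Adj x y → x ∈ P'.support → y ∈ P'.support →
      s(x, y) ∉ P'.edges → ((x = a' ∧ y = b') ∨ (x = b' ∧ y = a')) := by
    intro x y hadj hx hy hne
    have hxab : x = a' ∨ x = b' := by
      by_contra hcon
      push_neg at hcon
      obtain ⟨u, u', -, hiff, hFiff⟩ := hintP' x hx hcon.1 hcon.2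
      exact hne ((hiff y).mpr ((hFiff y).mp hadj))
    have hyab : y = a' ∨ y = b' := by
      by_contra hcon
      push_neg at hcon
      obtain ⟨u, u', -, hiff, hFiff⟩ := hintP' y hy hcon.1 hcon.2
      exact hne (by rw [Sym2.eq_swap]; exact (hiff x).mpr ((hFiff x).mp hadj.symm))
    rcases hxab with rfl | rfl <;> rcases hyab with h | h
    · exact absurd h.symm hadj.ne
    · exact Or.inl ⟨rfl, h⟩
    · exact Or.inr ⟨rfl, h⟩
    · exact absurd h.symm hadj.ne
  -- degree computation
  have hNH : ∀ v, (H.neighborSet v).ncard = 2 := by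
    intro v
    by_cases hvP : v ∈ P.support
    · have hvP' : v ∉ P'.support := hPP' v hvP
      by_cases hva : v = a
      · subst hva
        have hvR' : v ∉ R'.support := hRR' v haR
        have hqara : qa ≠ ra := by
          intro h
          have hraR : ra ∈ R.support := R.snd_mem_support_of_mem_edges ((hRa ra).mpr rfl)
          have hqc : F.connectedComponentMk qa = c := by
            rw [← hQ v qa ((hFa qa).mpr (Or.inr rfl))]; exact hca
          have hqaP : qa ∈ P.support :=
            hclassP qa hqc (hsupRP qa (h ▸ hraR))
          rcases hextra v qa ((hFa qa).mpr (Or.inr rfl)) haP hqaP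
              (fun hh => hqa ((hPa qa).mp hh)) with ⟨-, h2⟩ | ⟨h2, -⟩
          · exact hRR' ra hraR (by rw [← h, h2]; exact hbR')
          · exact hab h2
        have hset : H.neighborSet v = {qa, ra} := by
          ext w
          simp only [SimpleGraph.mem_neighborSet, Set.mem_insert_iff,
            Set.mem_singleton_iff]
          rw [hH]
          constructor
          · rintro (⟨h1, h2, h3⟩ | h | h)
            · rcases (hFa w).mp h1 with rfl | rfl
              · exact absurd ((hPa w).mpr rfl) h2
              · exact Or.inl rfl
            · exact Or.inr ((hRa w).mp h)
            · exact absurd (R'.fst_mem_support_of_mem_edges h) hvR'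
          · rintro (rfl | rfl)
            · exact Or.inl ⟨(hFa w).mpr (Or.inr rfl),
                fun hh => hqa ((hPa w).mp hh),
                not_mem_edges_of_not_mem_support P' hvP'⟩
            · exact Or.inr (Or.inl ((hRa w).mpr rfl))
        rw [hset]
        exact Set.ncard_pair hqara
      · by_cases hvb : v = b
        · subst hvb
          have hvR : v ∉ R.support := fun h => hRR' v h hbR'
          have hqbrb : qb ≠ rb := by
            intro h
            have hrbR : rb ∈ R'.support := R'.snd_mem_support_of_mem_edges ((hRb rb).mpr rfl)
            have hqc : F.connectedComponentMk qb = c := by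
              rw [← hQ v qb ((hFb qb).mpr (Or.inr rfl))]; exact hcb
            have hqbP : qb ∈ P.support :=
              hclassP qb hqc (hsupR'P qb (h ▸ hrbR))
            rcases hextra v qb ((hFb qb).mpr (Or.inr rfl)) hbP hqbP
                (fun hh => hqb ((hPb qb).mp hh)) with ⟨h2, -⟩ | ⟨-, h2⟩
            · exact hab h2.symm
            · exact hRR' a haR (by rw [← h2, h]; exact hrbR)
          have hset : H.neighborSet v = {qb, rb} := by
            ext w
            simp only [SimpleGraph.mem_neighborSet, Set.mem_insert_iff,
              Set.mem_singleton_iff]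
            rw [hH]
            constructor
            · rintro (⟨h1, h2, h3⟩ | h | h)
              · rcases (hFb w).mp h1 with rfl | rfl
                · exact absurd ((hPb w).mpr rfl) h2
                · exact Or.inl rfl
              · exact absurd (R.fst_mem_support_of_mem_edges h) hvR
              · exact Or.inr ((hRb w).mp h)
            · rintro (rfl | rfl)
              · exact Or.inl ⟨(hFb w).mpr (Or.inr rfl),
                  fun hh => hqb ((hPb w).mp hh),
                  not_mem_edges_of_not_mem_support P' hvP'⟩
              · exact Or.inr (Or.inr ((hRb w).mpr rfl))
          rw [hset]
          exact Set.ncard_pair hqbrb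
        · -- interior of P
          obtain ⟨u, u', hne, hiffP, hiffF⟩ := hintP v hvP hva hvb
          rcases hsupPR v hvP with hvR | hvR'
          · have hvR'2 : v ∉ R'.support := hRR' v hvR
            have hvb'2 : v ≠ b' := fun h => hvP' (h ▸ hb'P')
            obtain ⟨r, r', hrne, hiffR⟩ := hintR v hvR hva hvb'2
            have hset : H.neighborSet v = {r, r'} := by
              ext w
              simp only [SimpleGraph.mem_neighborSet, Set.mem_insert_iff,
                Set.mem_singleton_iff]
              rw [hH]
              constructor
              · rintro (⟨h1, h2, h3⟩ | h | h)
                · exact absurd ((hiffP w).mpr ((hiffF w).mp h1)) h2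
                · exact (hiffR w).mp h
                · exact absurd (R'.fst_mem_support_of_mem_edges h) hvR'2
              · intro h
                exact Or.inr (Or.inl ((hiffR w).mpr h))
            rw [hset]
            exact Set.ncard_pair hrne
          · have hvR2 : v ∉ R.support := fun h => hRR' v h hvR'
            have hva'2 : v ≠ a' := fun h => hvP' (h ▸ ha'P')
            obtain ⟨r, r', hrne, hiffR⟩ := hintR' v hvR' hva'2 hvb
            have hset : H.neighborSet v = {r, r'} := by
              ext w
              simp only [SimpleGraph.mem_neighborSet, Set.mem_insert_iff,
                Set.mem_singleton_iff]
              rw [hH]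
              constructor
              · rintro (⟨h1, h2, h3⟩ | h | h)
                · exact absurd ((hiffP w).mpr ((hiffF w).mp h1)) h2
                · exact absurd (R.fst_mem_support_of_mem_edges h) hvR2
                · exact (hiffR w).mp h
              · intro h
                exact Or.inr (Or.inr ((hiffR w).mpr h))
            rw [hset]
            exact Set.ncard_pair hrne
    · by_cases hvP' : v ∈ P'.support
      · by_cases hva' : v = a'
        · subst hva'
          have hvR : v ∉ R.support := fun h => hRR' v h ha'R'
          have hq : qa' ≠ ra' := by
            intro h
            have hrR' : ra' ∈ R'.support :=
              R'.snd_mem_support_of_mem_edges ((hRa' ra').mpr rfl)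
            have hqc : F.connectedComponentMk qa' = c' := by
              rw [← hQ v qa' ((hFa' qa').mpr (Or.inr rfl))]; exact hc'a'
            have hqP' : qa' ∈ P'.support :=
              hclassP' qa' hqc (hsupR'P qa' (h ▸ hrR'))
            rcases hextra' v qa' ((hFa' qa').mpr (Or.inr rfl)) ha'P' hqP'
                (fun hh => hqa' ((hPa' qa').mp hh)) with ⟨-, h2⟩ | ⟨h2, -⟩
            · exact hRR' b' hb'R (by rw [← h2, h]; exact hrR')
            · exact ha'b' h2
          have hset : H.neighborSet v = {qa', ra'} := by
            ext w
            simp only [SimpleGraph.mem_neighborSet, Set.mem_insert_iff,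
              Set.mem_singleton_iff]
            rw [hH]
            constructor
            · rintro (⟨h1, h2, h3⟩ | h | h)
              · rcases (hFa' w).mp h1 with rfl | rfl
                · exact absurd ((hPa' w).mpr rfl) h3
                · exact Or.inl rfl
              · exact absurd (R.fst_mem_support_of_mem_edges h) hvR
              · exact Or.inr ((hRa' w).mp h)
            · rintro (rfl | rfl)
              · exact Or.inl ⟨(hFa' w).mpr (Or.inr rfl),
                  not_mem_edges_of_not_mem_support P hvP,
                  fun hh => hqa' ((hPa' w).mp hh)⟩
              · exact Or.inr (Or.inr ((hRa' w).mpr rfl))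
          rw [hset]
          exact Set.ncard_pair hq
        · by_cases hvb' : v = b'
          · subst hvb'
            have hvR' : v ∉ R'.support := hRR' v hb'R
            have hq : qb' ≠ rb' := by
              intro h
              have hrR : rb' ∈ R.support :=
                R.snd_mem_support_of_mem_edges ((hRb' rb').mpr rfl)
              have hqc : F.connectedComponentMk qb' = c' := by
                rw [← hQ v qb' ((hFb' qb').mpr (Or.inr rfl))]; exact hc'b'
              have hqP' : qb' ∈ P'.support :=
                hclassP' qb' hqc (hsupRP qb' (h ▸ hrR))
              rcases hextra' v qb' ((hFb' qb').mpr (Or.inr rfl)) hb'P' hqP'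
                  (fun hh => hqb' ((hPb' qb').mp hh)) with ⟨h2, -⟩ | ⟨-, h2⟩
              · exact ha'b' h2.symm
              · exact hRR' rb' hrR (by rw [← h, h2]; exact ha'R')
            have hset : H.neighborSet v = {qb', rb'} := by
              ext w
              simp only [SimpleGraph.mem_neighborSet, Set.mem_insert_iff,
                Set.mem_singleton_iff]
              rw [hH]
              constructor
              · rintro (⟨h1, h2, h3⟩ | h | h)
                · rcases (hFb' w).mp h1 with rfl | rfl
                  · exact absurd ((hPb' w).mpr rfl) h3
                  · exact Or.inl rfl
                · exact Or.inr ((hRb' w).mp h)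
                · exact absurd (R'.fst_mem_support_of_mem_edges h) hvR'
              · rintro (rfl | rfl)
                · exact Or.inl ⟨(hFb' w).mpr (Or.inr rfl),
                    not_mem_edges_of_not_mem_support P hvP,
                    fun hh => hqb' ((hPb' w).mp hh)⟩
                · exact Or.inr (Or.inl ((hRb' w).mpr rfl))
            rw [hset]
            exact Set.ncard_pair hq
          · -- interior of P'
            obtain ⟨u, u', hne, hiffP, hiffF⟩ := hintP' v hvP' hva' hvb'
            rcases hsupP'R v hvP' with hvR | hvR'
            · have hvR'2 : v ∉ R'.support := hRR' v hvR
              have hva2 : v ≠ a := fun h => hvP (h ▸ haP)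
              obtain ⟨r, r', hrne, hiffR⟩ := hintR v hvR hva2 hvb'
              have hset : H.neighborSet v = {r, r'} := by
                ext w
                simp only [SimpleGraph.mem_neighborSet, Set.mem_insert_iff,
                  Set.mem_singleton_iff]
                rw [hH]
                constructor
                · rintro (⟨h1, h2, h3⟩ | h | h)
                  · exact absurd ((hiffP w).mpr ((hiffF w).mp h1)) h3
                  · exact (hiffR w).mp h
                  · exact absurd (R'.fst_mem_support_of_mem_edges h) hvR'2
                · intro h
                  exact Or.inr (Or.inl ((hiffR w).mpr h))
              rw [hset]
              exact Set.ncard_pair hrne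
            · have hvR2 : v ∉ R.support := fun h => hRR' v h hvR'
              have hvb2 : v ≠ b := fun h => hvP (h ▸ hbP)
              obtain ⟨r, r', hrne, hiffR⟩ := hintR' v hvR' hva' hvb2
              have hset : H.neighborSet v = {r, r'} := by
                ext w
                simp only [SimpleGraph.mem_neighborSet, Set.mem_insert_iff,
                  Set.mem_singleton_iff]
                rw [hH]
                constructor
                · rintro (⟨h1, h2, h3⟩ | h | h)
                  · exact absurd ((hiffP w).mpr ((hiffF w).mp h1)) h3
                  · exact absurd (R.fst_mem_support_of_mem_edges h) hvR2
                  · exact (hiffR w).mp h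
                · intro h
                  exact Or.inr (Or.inr ((hiffR w).mpr h))
              rw [hset]
              exact Set.ncard_pair hrne
      · -- away from everything
        have hvR : v ∉ R.support := fun h => (hsupRP v h).elim hvP hvP'
        have hvR' : v ∉ R'.support := fun h => (hsupR'P v h).elim hvP hvP'
        have hset : H.neighborSet v = F.neighborSet v := by
          ext w
          simp only [SimpleGraph.mem_neighborSet]
          rw [hH]
          constructor
          · rintro (⟨h1, -, -⟩ | h | h)
            · exact h1
            · exact absurd (R.fst_mem_support_of_mem_edges h) hvR
            · exact absurd (R'.fst_mem_support_of_mem_edges h) hvR'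
          · intro h
            exact Or.inl ⟨h, not_mem_edges_of_not_mem_support P hvP,
              not_mem_edges_of_not_mem_support P' hvP'⟩
        rw [hset]
        exact hreg v
  -- the auxiliary graph F₂ = F minus the edges of P and P'
  set F₂ := F.deleteEdges ({e | e ∈ P.edges} ∪ {e | e ∈ P'.edges}) with hF₂def
  have hF₂ : ∀ x y, F₂.Adj x y ↔
      (F.Adj x y ∧ s(x, y) ∉ P.edges ∧ s(x, y) ∉ P'.edges) := by
    intro x y
    rw [hF₂def, SimpleGraph.deleteEdges_adj]
    simp only [Set.mem_union, Set.mem_setOf_eq]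
    tauto
  have hF₂F : F₂ ≤ F := by
    rw [hF₂def]
    exact SimpleGraph.deleteEdges_le _
  have hF₂H : F₂ ≤ H := by
    intro x y h
    exact (hH x y).mpr (Or.inl ((hF₂ x y).mp h))
  have hNF₂a : F₂.neighborSet a = {qa} := by
    ext w
    simp only [SimpleGraph.mem_neighborSet, Set.mem_singleton_iff]
    rw [hF₂]
    constructor
    · rintro ⟨h1, h2, -⟩
      rcases (hFa w).mp h1 with rfl | rfl
      · exact absurd ((hPa w).mpr rfl) h2
      · rfl
    · rintro rfl
      exact ⟨(hFa w).mpr (Or.inr rfl), fun hh => hqa ((hPa w).mp hh),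
        not_mem_edges_of_not_mem_support P' (hPP' a haP)⟩
  have hNF₂a' : F₂.neighborSet a' = {qa'} := by
    ext w
    simp only [SimpleGraph.mem_neighborSet, Set.mem_singleton_iff]
    rw [hF₂]
    constructor
    · rintro ⟨h1, -, h3⟩
      rcases (hFa' w).mp h1 with rfl | rfl
      · exact absurd ((hPa' w).mpr rfl) h3
      · rfl
    · rintro rfl
      exact ⟨(hFa' w).mpr (Or.inr rfl),
        not_mem_edges_of_not_mem_support P (fun hh => hPP' a' hh ha'P'),
        fun hh => hqa' ((hPa' w).mp hh)⟩
  have hotherc : ∀ w, F.Reachable a w → w ≠ a → w ≠ b →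
      ¬ Odd ((F₂.neighborSet w).ncard) := by
    intro w hw h1 h2
    have hwc : F.connectedComponentMk w = c := by
      have hh := SimpleGraph.ConnectedComponent.eq.mpr hw
      rw [← hh]
      exact hca
    have hwP' : w ∉ P'.support := fun hh => hcc (hwc.symm.trans (hP'c w hh))
    by_cases hwP : w ∈ P.support
    · obtain ⟨u, u', -, hiffP, hiffF⟩ := hintP w hwP h1 h2
      have hempty : F₂.neighborSet w = ∅ := by
        ext y
        simp only [SimpleGraph.mem_neighborSet, Set.mem_empty_iff_false, iff_false]
        intro hy
        obtain ⟨hy1, hy2, -⟩ := (hF₂ w y).mp hy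
        exact hy2 ((hiffP y).mpr ((hiffF y).mp hy1))
      rw [hempty]
      simp
    · have heq : F₂.neighborSet w = F.neighborSet w := by
        ext y
        simp only [SimpleGraph.mem_neighborSet]
        rw [hF₂]
        constructor
        · exact fun h => h.1
        · intro h
          exact ⟨h, not_mem_edges_of_not_mem_support P hwP,
            not_mem_edges_of_not_mem_support P' hwP'⟩
      rw [heq, hreg w]
      decide
  have hotherc' : ∀ w, F.Reachable a' w → w ≠ a' → w ≠ b' →
      ¬ Odd ((F₂.neighborSet w).ncard) := by
    intro w hw h1 h2
    have hwc : F.connectedComponentMk w = c' := by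
      have hh := SimpleGraph.ConnectedComponent.eq.mpr hw
      rw [← hh]
      exact hc'a'
    have hwP : w ∉ P.support := fun hh => hcc ((hPc w hh).symm.trans hwc)
    by_cases hwP' : w ∈ P'.support
    · obtain ⟨u, u', -, hiffP, hiffF⟩ := hintP' w hwP' h1 h2
      have hempty : F₂.neighborSet w = ∅ := by
        ext y
        simp only [SimpleGraph.mem_neighborSet, Set.mem_empty_iff_false, iff_false]
        intro hy
        obtain ⟨hy1, -, hy3⟩ := (hF₂ w y).mp hy
        exact hy3 ((hiffP y).mpr ((hiffF y).mp hy1))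
      rw [hempty]
      simp
    · have heq : F₂.neighborSet w = F.neighborSet w := by
        ext y
        simp only [SimpleGraph.mem_neighborSet]
        rw [hF₂]
        constructor
        · exact fun h => h.1
        · intro h
          exact ⟨h, not_mem_edges_of_not_mem_support P hwP,
            not_mem_edges_of_not_mem_support P' hwP'⟩
      rw [heq, hreg w]
      decide
  have hF₂ab : F₂.Reachable a b :=
    reach_endpoints F F₂ hF₂F a b (by rw [hNF₂a]; exact Set.ncard_singleton qa) hotherc
  have hF₂a'b' : F₂.Reachable a' b' :=
    reach_endpoints F F₂ hF₂F a' b'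
      (by rw [hNF₂a']; exact Set.ncard_singleton qa') hotherc'
  -- reachability inside H along R and R'
  have hRwalkH : ∀ e ∈ R.edges, e ∈ H.edgeSet := by
    intro e he
    induction e using Sym2.ind with
    | _ x y => exact (SimpleGraph.mem_edgeSet H).mpr ((hH x y).mpr (Or.inr (Or.inl he)))
  have hR'walkH : ∀ e ∈ R'.edges, e ∈ H.edgeSet := by
    intro e he
    induction e using Sym2.ind with
    | _ x y => exact (SimpleGraph.mem_edgeSet H).mpr ((hH x y).mpr (Or.inr (Or.inr he)))
  have hRreach : ∀ w, w ∈ R.support → H.Reachable a w := by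
    intro w hw
    have hw' : w ∈ (R.transfer H hRwalkH).support := by
      rwa [SimpleGraph.Walk.support_transfer]
    exact ⟨(R.transfer H hRwalkH).takeUntil w hw'⟩
  have hR'reach : ∀ w, w ∈ R'.support → H.Reachable a' w := by
    intro w hw
    have hw' : w ∈ (R'.transfer H hR'walkH).support := by
      rwa [SimpleGraph.Walk.support_transfer]
    exact ⟨(R'.transfer H hR'walkH).takeUntil w hw'⟩
  have habH : H.Reachable a b := hF₂ab.mono hF₂H
  have ha'b'H : H.Reachable a' b' := hF₂a'b'.mono hF₂H
  have hab'H : H.Reachable a b' := hRreach b' hb'R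
  have ha'aH : H.Reachable a a' := hab'H.trans ha'b'H.symm
  -- closure argument for vertices off the paths
  have hreachF₂c : ∀ v, F.connectedComponentMk v = c → v ∉ P.support →
      F₂.Reachable v a := by
    intro v hv hvP
    by_contra hnr
    have hstep : ∀ x y, F₂.Reachable v x → F.Adj x y →
        F₂.Adj x y ∧ F₂.Reachable v y := by
      intro x y hx hxy
      have hxc : F.connectedComponentMk x = c := by
        have hh := SimpleGraph.ConnectedComponent.eq.mpr (hx.mono hF₂F)
        rw [← hh]
        exact hv
      have hxa : x ≠ a := fun hh => hnr (hh ▸ hx)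
      have hxb : x ≠ b := fun hh => hnr ((hh ▸ hx).trans hF₂ab.symm)
      have hxP' : x ∉ P'.support := fun hh => hcc (hxc.symm.trans (hP'c x hh))
      by_cases hxP : x ∈ P.support
      · exfalso
        obtain ⟨u, u', -, hiffP, hiffF⟩ := hintP x hxP hxa hxb
        have hxv : x ≠ v := fun hh => hvP (hh ▸ hxP)
        obtain ⟨W⟩ := hx
        obtain ⟨y₀, hadj, -, -⟩ := SimpleGraph.Walk.exists_eq_cons_of_ne hxv W.reverse
        obtain ⟨hadj1, hadj2, -⟩ := (hF₂ x y₀).mp hadj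
        exact hadj2 ((hiffP y₀).mpr ((hiffF y₀).mp hadj1))
      · have hA : F₂.Adj x y := (hF₂ x y).mpr
          ⟨hxy, not_mem_edges_of_not_mem_support P hxP,
            not_mem_edges_of_not_mem_support P' hxP'⟩
        exact ⟨hA, hx.trans hA.reachable⟩
    have hreach : F.Reachable v a :=
      SimpleGraph.ConnectedComponent.eq.mp (hv.trans hca.symm)
    obtain ⟨W⟩ := hreach
    exact hnr (walk_invariant_reach _ hstep (SimpleGraph.Reachable.refl v) W)
  have hreachF₂c' : ∀ v, F.connectedComponentMk v = c' → v ∉ P'.support →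
      F₂.Reachable v a' := by
    intro v hv hvP'
    by_contra hnr
    have hstep : ∀ x y, F₂.Reachable v x → F.Adj x y →
        F₂.Adj x y ∧ F₂.Reachable v y := by
      intro x y hx hxy
      have hxc : F.connectedComponentMk x = c' := by
        have hh := SimpleGraph.ConnectedComponent.eq.mpr (hx.mono hF₂F)
        rw [← hh]
        exact hv
      have hxa : x ≠ a' := fun hh => hnr (hh ▸ hx)
      have hxb : x ≠ b' := fun hh => hnr ((hh ▸ hx).trans hF₂a'b'.symm)
      have hxP : x ∉ P.support := fun hh => hcc ((hPc x hh).symm.trans hxc)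
      by_cases hxP' : x ∈ P'.support
      · exfalso
        obtain ⟨u, u', -, hiffP, hiffF⟩ := hintP' x hxP' hxa hxb
        have hxv : x ≠ v := fun hh => hvP' (hh ▸ hxP')
        obtain ⟨W⟩ := hx
        obtain ⟨y₀, hadj, -, -⟩ := SimpleGraph.Walk.exists_eq_cons_of_ne hxv W.reverse
        obtain ⟨hadj1, -, hadj3⟩ := (hF₂ x y₀).mp hadj
        exact hadj3 ((hiffP y₀).mpr ((hiffF y₀).mp hadj1))
      · have hA : F₂.Adj x y := (hF₂ x y).mpr
          ⟨hxy, not_mem_edges_of_not_mem_support P hxP,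
            not_mem_edges_of_not_mem_support P' hxP'⟩
        exact ⟨hA, hx.trans hA.reachable⟩
    have hreach : F.Reachable v a' :=
      SimpleGraph.ConnectedComponent.eq.mp (hv.trans hc'a'.symm)
    obtain ⟨W⟩ := hreach
    exact hnr (walk_invariant_reach _ hstep (SimpleGraph.Reachable.refl v) W)
  have hjoin : ∀ v, (F.connectedComponentMk v = c ∨ F.connectedComponentMk v = c') →
      H.Reachable a v := by
    rintro v (hv | hv)
    · by_cases hvP : v ∈ P.support
      · rcases hsupPR v hvP with h | h
        · exact hRreach v h
        · exact ha'aH.trans (hR'reach v h)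
      · exact ((hreachF₂c v hv hvP).mono hF₂H).symm
    · by_cases hvP' : v ∈ P'.support
      · rcases hsupP'R v hvP' with h | h
        · exact hRreach v h
        · exact ha'aH.trans (hR'reach v h)
      · exact ha'aH.trans ((hreachF₂c' v hv hvP').mono hF₂H).symm
  -- final assembly
  refine ⟨?_, ?_, hNH, fun v w hv hw => (hjoin v hv).symm.trans (hjoin w hw), ?_⟩
  · rw [hHdef, SimpleGraph.edgeSet_fromEdgeSet]
    ext e
    simp only [Set.mem_diff, Set.mem_setOf_eq]
    constructor
    · intro he
      refine ⟨he, ?_⟩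
      rw [hSdef] at he
      rcases he with ⟨he1, -⟩ | (he1 | he1)
      · exact F.not_isDiag_of_mem_edgeSet he1
      · exact G.not_isDiag_of_mem_edgeSet (R.edges_subset_edgeSet he1)
      · exact G.not_isDiag_of_mem_edgeSet (R'.edges_subset_edgeSet he1)
    · exact And.left
  · intro x y h
    rw [hH] at h
    rcases h with ⟨h1, -, -⟩ | h | h
    · exact hFG h1
    · exact R.adj_of_mem_edges h
    · exact R'.adj_of_mem_edges h
  · intro v hv1 hv2 w
    constructor
    · intro hr
      obtain ⟨W⟩ := hr
      refine walk_invariant_reach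
        (fun x => F.connectedComponentMk x = F.connectedComponentMk v) ?_ rfl W
      intro x y hx hxy
      rw [hH] at hxy
      rcases hxy with ⟨h1, -, -⟩ | h | h
      · exact ⟨h1, (hQ x y h1).symm.trans hx⟩
      · exfalso
        rcases hsupRP x (R.fst_mem_support_of_mem_edges h) with hh | hh
        · exact hv1 (hx ▸ hPc x hh)
        · exact hv2 (hx ▸ hP'c x hh)
      · exfalso
        rcases hsupR'P x (R'.fst_mem_support_of_mem_edges h) with hh | hh
        · exact hv1 (hx ▸ hPc x hh)
        · exact hv2 (hx ▸ hP'c x hh)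
    · intro hr
      obtain ⟨W⟩ := hr
      refine walk_invariant_reach
        (fun x => F.connectedComponentMk x = F.connectedComponentMk v) ?_ rfl W
      intro x y hx hxy
      refine ⟨(hH x y).mpr (Or.inl ⟨hxy, ?_, ?_⟩), (hQ x y hxy).symm.trans hx⟩
      · intro hh
        exact hv1 (hx ▸ hPc x (P.fst_mem_support_of_mem_edges hh))
      · intro hh
        exact hv2 (hx ▸ hP'c x (P'.fst_mem_support_of_mem_edges hh))
end
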